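/- arXiv:2411.03880 — 10 statements merged into one kernel-verified Lean document; each statement's English description precedes it below -/
import Mathlib

section
/- Let F be a field. The Lie algebra sl₂(F) of 2×2 matrices over F of trace zero (with the commutator bracket) is CA if and only if the characteristic of F is not 2. -/
open Matrix LieAlgebra.SpecialLinear

/-- A Lie ring (in particular, a Lie algebra) is CA if the centralizer of
every nonzero element is abelian. -/
def IsCA (L : Type*) [LieRing L] : Prop :=
  ∀ x : L, x ≠ 0 → ∀ y z : L, ⁅x, y⁆ = 0 → ⁅x, z⁆ = 0 → ⁅y, z⁆ = 0

lemma scalar_key {F : Type*} [Field F]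
    (a b c d e f g h i : F)
    (hne : a ≠ 0 ∨ b ≠ 0 ∨ c ≠ 0)
    (e1 : b*f = e*c) (e2 : a*e = b*d) (e3 : a*f = c*d)
    (e4 : b*i = h*c) (e5 : a*h = b*g) (e6 : a*i = c*g) :
    e*i = f*h ∧ d*h = e*g ∧ d*i = f*g := by
  rcases hne with ha | hb | hc
  · refine ⟨?_, ?_, ?_⟩
    · have : a * a * (e*i) = a * a * (f*h) := by
        linear_combination (a*i) * e2 + (b*d) * e6 - (a*h) * e3 - (c*d) * e5
      exact mul_left_cancel₀ (mul_ne_zero ha ha) this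
    · have : a * (d*h) = a * (e*g) := by linear_combination d * e5 - g * e2
      exact mul_left_cancel₀ ha this
    · have : a * (d*i) = a * (f*g) := by linear_combination d * e6 - g * e3
      exact mul_left_cancel₀ ha this
  · have k1 : e*i = f*h := by
      have : b * (e*i) = b * (f*h) := by linear_combination (-h) * e1 + e * e4
      exact mul_left_cancel₀ hb this
    refine ⟨k1, ?_, ?_⟩
    · have : b * (d*h) = b * (e*g) := by linear_combination (-h) * e2 + e * e5
      exact mul_left_cancel₀ hb this
    · have : b * (d*i) = b * (f*g) := by
        linear_combination (-i) * e2 + f * e5 + a * k1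
      exact mul_left_cancel₀ hb this
  · have k1 : e*i = f*h := by
      have : c * (e*i) = c * (f*h) := by linear_combination (-i) * e1 + f * e4
      exact mul_left_cancel₀ hc this
    refine ⟨k1, ?_, ?_⟩
    · have : c * (d*h) = c * (e*g) := by
        linear_combination (-h) * e3 + e * e6 - a * k1
      exact mul_left_cancel₀ hc this
    · have : c * (d*i) = c * (f*g) := by linear_combination (-i) * e3 + f * e6
      exact mul_left_cancel₀ hc this

lemma matrix_key {F : Type*} [Field F] (h2 : (2:F) ≠ 0)
    (A B C : Matrix (Fin 2) (Fin 2) F)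
    (hA : A 1 1 = -A 0 0) (hB : B 1 1 = -B 0 0) (hC : C 1 1 = -C 0 0)
    (hAne : A ≠ 0) (hAB : A*B = B*A) (hAC : A*C = C*A) : B*C = C*B := by
  have q : ∀ i j, (A*B) i j = (B*A) i j := fun i j => by rw [hAB]
  have r : ∀ i j, (A*C) i j = (C*A) i j := fun i j => by rw [hAC]
  simp only [Matrix.mul_apply, Fin.sum_univ_two] at q r
  have q00 := q 0 0
  have q01 := q 0 1
  have q10 := q 1 0
  have r00 := r 0 0
  have r01 := r 0 1
  have r10 := r 1 0
  simp only [hA, hB] at q00 q01 q10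
  simp only [hA, hC] at r00 r01 r10
  have e1 : A 0 1 * B 1 0 = B 0 1 * A 1 0 := by linear_combination q00
  have e2 : A 0 0 * B 0 1 = A 0 1 * B 0 0 := by
    have : (2:F) * (A 0 0 * B 0 1) = (2:F) * (A 0 1 * B 0 0) := by
      linear_combination q01
    exact mul_left_cancel₀ h2 this
  have e3 : A 0 0 * B 1 0 = A 1 0 * B 0 0 := by
    have : (2:F) * (A 0 0 * B 1 0) = (2:F) * (A 1 0 * B 0 0) := by
      linear_combination - q10
    exact mul_left_cancel₀ h2 this
  have e4 : A 0 1 * C 1 0 = C 0 1 * A 1 0 := by linear_combination r00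
  have e5 : A 0 0 * C 0 1 = A 0 1 * C 0 0 := by
    have : (2:F) * (A 0 0 * C 0 1) = (2:F) * (A 0 1 * C 0 0) := by
      linear_combination r01
    exact mul_left_cancel₀ h2 this
  have e6 : A 0 0 * C 1 0 = A 1 0 * C 0 0 := by
    have : (2:F) * (A 0 0 * C 1 0) = (2:F) * (A 1 0 * C 0 0) := by
      linear_combination - r10
    exact mul_left_cancel₀ h2 this
  have hne : A 0 0 ≠ 0 ∨ A 0 1 ≠ 0 ∨ A 1 0 ≠ 0 := by
    by_contra hcon
    push_neg at hcon
    obtain ⟨ha, hb, hc⟩ := hcon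
    apply hAne
    ext i j
    fin_cases i <;> fin_cases j <;> simp [ha, hb, hc, hA]
  obtain ⟨k1, k2, k3⟩ := scalar_key (A 0 0) (A 0 1) (A 1 0)
    (B 0 0) (B 0 1) (B 1 0) (C 0 0) (C 0 1) (C 1 0) hne
    (by linear_combination e1) (by linear_combination e2) (by linear_combination e3)
    (by linear_combination e4) (by linear_combination e5) (by linear_combination e6)
  rw [← Matrix.ext_iff]
  simp only [Fin.forall_fin_two, Matrix.mul_apply, Fin.sum_univ_two, hB, hC]
  refine ⟨⟨?_, ?_⟩, ?_, ?_⟩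
  · linear_combination k1
  · linear_combination 2 * k2
  · linear_combination (-2) * k3
  · linear_combination - k1

theorem sl2_CA_iff_char_ne_two (F : Type*) [Field F] :
    IsCA (LieAlgebra.SpecialLinear.sl (Fin 2) F) ↔ ringChar F ≠ 2 := by
  constructor
  · intro hCA hchar
    have h2 : (2:F) = 0 := by
      have : ((2:ℕ):F) = 0 := (ringChar.spec F 2).mpr (hchar ▸ dvd_refl _)
      simpa using this
    have hx1 : (1 : Matrix (Fin 2) (Fin 2) F) ∈ sl (Fin 2) F := by
      show Matrix.trace (1 : Matrix (Fin 2) (Fin 2) F) = 0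
      simp [Matrix.trace_one]
      exact h2
    have hy1 : (!![0,1;0,0] : Matrix (Fin 2) (Fin 2) F) ∈ sl (Fin 2) F := by
      show Matrix.trace (!![0,1;0,0] : Matrix (Fin 2) (Fin 2) F) = 0
      simp [Matrix.trace_fin_two]
    have hz1 : (!![0,0;1,0] : Matrix (Fin 2) (Fin 2) F) ∈ sl (Fin 2) F := by
      show Matrix.trace (!![0,0;1,0] : Matrix (Fin 2) (Fin 2) F) = 0
      simp [Matrix.trace_fin_two]
    set x : sl (Fin 2) F := ⟨1, hx1⟩
    set y : sl (Fin 2) F := ⟨!![0,1;0,0], hy1⟩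
    set z : sl (Fin 2) F := ⟨!![0,0;1,0], hz1⟩
    have hxne : x ≠ 0 := by
      intro hx
      have : (1 : Matrix (Fin 2) (Fin 2) F) = 0 := congrArg Subtype.val hx
      exact one_ne_zero this
    have hxy : ⁅x, y⁆ = 0 := by
      apply Subtype.ext
      rw [sl_bracket]
      simp [x, y]
    have hxz : ⁅x, z⁆ = 0 := by
      apply Subtype.ext
      rw [sl_bracket]
      simp [x, z]
    have := hCA x hxne y z hxy hxz
    have h0 : (⁅y, z⁆ : sl (Fin 2) F).val = 0 := by rw [this]; rfl
    rw [sl_bracket] at h0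
    have h00 : ((y.val * z.val - z.val * y.val) : Matrix (Fin 2) (Fin 2) F) 0 0 = 0 := by
      rw [h0]; rfl
    simp [Matrix.mul_apply, Fin.sum_univ_two, y, z] at h00
  · intro hchar
    have h2 : (2:F) ≠ 0 := by
      intro h
      apply hchar
      have hd : ringChar F ∣ 2 := (ringChar.spec F 2).mp (by exact_mod_cast h)
      rcases (Nat.dvd_prime Nat.prime_two).mp hd with h1 | h1
      · exfalso
        have : ((1:ℕ):F) = 0 := (ringChar.spec F 1).mpr (h1 ▸ dvd_refl _)
        simp at this
      · exact h1
    intro x hx y z hxy hxz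
    have hA : (x : Matrix (Fin 2) (Fin 2) F) 1 1 = -(x : Matrix (Fin 2) (Fin 2) F) 0 0 := by
      have := x.2
      have ht : Matrix.trace (x : Matrix (Fin 2) (Fin 2) F) = 0 := this
      rw [Matrix.trace_fin_two] at ht
      linear_combination ht
    have hB : (y : Matrix (Fin 2) (Fin 2) F) 1 1 = -(y : Matrix (Fin 2) (Fin 2) F) 0 0 := by
      have ht : Matrix.trace (y : Matrix (Fin 2) (Fin 2) F) = 0 := y.2
      rw [Matrix.trace_fin_two] at ht
      linear_combination ht
    have hC : (z : Matrix (Fin 2) (Fin 2) F) 1 1 = -(z : Matrix (Fin 2) (Fin 2) F) 0 0 := by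
      have ht : Matrix.trace (z : Matrix (Fin 2) (Fin 2) F) = 0 := z.2
      rw [Matrix.trace_fin_two] at ht
      linear_combination ht
    have hAne : (x : Matrix (Fin 2) (Fin 2) F) ≠ 0 := fun h => hx (Subtype.ext h)
    have hAB : (x : Matrix (Fin 2) (Fin 2) F) * y = (y : Matrix (Fin 2) (Fin 2) F) * x := by
      have := congrArg Subtype.val hxy
      rw [sl_bracket] at this
      exact sub_eq_zero.mp this
    have hAC : (x : Matrix (Fin 2) (Fin 2) F) * z = (z : Matrix (Fin 2) (Fin 2) F) * x := by
      have := congrArg Subtype.val hxz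
      rw [sl_bracket] at this
      exact sub_eq_zero.mp this
    apply Subtype.ext
    rw [sl_bracket, ZeroMemClass.coe_zero, sub_eq_zero]
    exact matrix_key h2 _ _ _ hA hB hC hAne hAB hAC
end

section
/- Let D be a division ring whose center K (which is a field) satisfies dim_K D = ℓ² for some prime ℓ. Then for every element x ∈ D with x ∉ K, the centralizer C_D(x) = {y ∈ D : xy = yx} is commutative. -/
open Module

section Aux

variable (D : Type*) [DivisionRing D]

/-- The centralizer of a set, as a submodule over the center. -/
def centralizerSubmodule (s : Set D) : Submodule (Subring.center D) D where
  carrier := Subring.centralizer s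
  add_mem' := add_mem
  zero_mem' := zero_mem _
  smul_mem' := fun k d hd => by
    have hk : (k : D) ∈ Subring.centralizer s := Subring.center_le_centralizer s k.2
    have : (k : D) * d ∈ Subring.centralizer s := mul_mem hk hd
    simpa [Subring.smul_def, smul_eq_mul, Subring.mem_centralizer_iff, Set.mem_centralizer_iff] using this

theorem mem_centralizerSubmodule_iff {s : Set D} {d : D} :
    d ∈ centralizerSubmodule D s ↔ d ∈ Subring.centralizer s := Iff.rfl

theorem centralizer_dim_aux (ℓ : ℕ) (hℓ : ℓ.Prime)
    (hdim : Module.finrank (Subring.center D) D = ℓ ^ 2)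
    (s : Set D) (x : D) (hxs : x ∈ Subring.centralizer s) (hx : x ∉ Subring.center D) :
    (∀ d : D, d ∈ Subring.centralizer s) ∨
      finrank (Subring.center D) (centralizerSubmodule D s) = ℓ := by
  classical
  set K := Subring.center D with hK
  set S := Subring.centralizer s with hS
  -- S is a division ring
  haveI : Nontrivial S := ⟨⟨0, 1, fun h => by
    have := congrArg (Subtype.val) h
    simpa using this⟩⟩
  letI : DivisionRing S := DivisionRing.ofIsUnitOrEqZero (fun a => by
    by_cases ha : a = 0
    · exact Or.inr ha
    · left
      have hinv : (a : D)⁻¹ ∈ S := by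
        have : (a : D) ∈ Set.centralizer s := by
          rw [← Subring.coe_centralizer]; exact a.2
        have h2 := Set.inv_mem_centralizer₀ this
        rw [← Subring.coe_centralizer] at h2; exact h2
      have ha' : (a : D) ≠ 0 := fun h => ha (Subtype.ext h)
      refine ⟨⟨a, ⟨(a : D)⁻¹, hinv⟩, ?_, ?_⟩, rfl⟩
      · exact Subtype.ext (by simp [mul_inv_cancel₀ ha'])
      · exact Subtype.ext (by simp [inv_mul_cancel₀ ha']))
  -- module structures
  letI : Module K S := (Subring.inclusion (Subring.center_le_centralizer s)).toModule
  haveI : IsScalarTower K S D := ⟨fun k a d => by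
    show ((Subring.inclusion (Subring.center_le_centralizer s) k * a : S) : D) * d
      = (k : D) * ((a : D) * d)
    push_cast
    rw [mul_assoc]
    rfl⟩
  haveI : FiniteDimensional K D :=
    FiniteDimensional.of_finrank_pos (by rw [hdim]; exact pow_pos hℓ.pos 2)
  haveI : StrongRankCondition S := by infer_instance
  haveI : Module.Free K S := Module.Free.of_divisionRing K S
  haveI : Module.Free S D := Module.Free.of_divisionRing S D
  have hmul : finrank K S * finrank S D = ℓ ^ 2 := by
    rw [finrank_mul_finrank K S D, hdim]
  -- finrank of the submodule agrees with finrank of S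
  have e : (centralizerSubmodule D s) ≃ₗ[K] S :=
    { toFun := fun a => ⟨a.1, a.2⟩
      map_add' := fun a b => rfl
      map_smul' := fun k a => rfl
      invFun := fun a => ⟨a.1, a.2⟩
      left_inv := fun a => rfl
      right_inv := fun a => rfl }
  have hfr : finrank K (centralizerSubmodule D s) = finrank K S := e.finrank_eq
  -- finrank K S ≠ 1
  have hne1 : finrank K S ≠ 1 := by
    intro h1
    have hone : (1 : S) ≠ 0 := one_ne_zero
    rw [finrank_eq_one_iff_of_nonzero (1 : S) hone] at h1
    have hxS : (⟨x, hxs⟩ : S) ∈ Submodule.span K {(1 : S)} := h1 ▸ Submodule.mem_top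
    obtain ⟨k, hk⟩ := Submodule.mem_span_singleton.mp hxS
    apply hx
    have : x = (k : D) := by
      have h2 : ((Subring.inclusion (Subring.center_le_centralizer s) k : S) : D) * 1
          = x := congrArg Subtype.val hk
      rw [mul_one] at h2
      exact h2.symm
    rw [this]; exact k.2
  -- divisibility
  have hdvd : finrank K S ∣ ℓ ^ 2 := ⟨finrank S D, hmul.symm⟩
  obtain ⟨m, hm2, hmeq⟩ := (Nat.dvd_prime_pow hℓ).mp hdvd
  interval_cases m
  · simp at hmeq; exact absurd hmeq hne1
  · right; rw [hfr, hmeq, pow_one]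
  · -- finrank K S = ℓ^2, so finrank S D = 1, so S = everything
    left
    have hb : finrank S D = 1 := by
      have hpos : 0 < ℓ ^ 2 := pow_pos hℓ.pos 2
      have h2 := hmul
      rw [hmeq] at h2
      exact Nat.eq_of_mul_eq_mul_left hpos (h2.trans (mul_one _).symm)
    have hone : (1 : D) ≠ 0 := one_ne_zero
    rw [finrank_eq_one_iff_of_nonzero (1 : D) hone] at hb
    intro d
    have hd : d ∈ Submodule.span S {(1 : D)} := hb ▸ Submodule.mem_top
    obtain ⟨c, hc⟩ := Submodule.mem_span_singleton.mp hd
    have : d = (c : D) := by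
      have := hc.symm
      simpa [Subring.smul_def, smul_eq_mul] using this
    rw [this]; exact c.2

end Aux

theorem centralizer_commutative_of_prime_degree
    (D : Type*) [DivisionRing D] (ℓ : ℕ) (hℓ : ℓ.Prime)
    (hdim : Module.finrank (Subring.center D) D = ℓ ^ 2)
    (x : D) (hx : x ∉ Subring.center D) :
    ∀ y z : D, x * y = y * x → x * z = z * x → y * z = z * y := by
  intro y z hy hz
  have hxC : x ∈ Subring.centralizer ({x} : Set D) := by
    rw [Subring.mem_centralizer_iff]; rintro g rfl; rfl
  rcases centralizer_dim_aux D ℓ hℓ hdim {x} x hxC hx with h | hC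
  · exact absurd (Subring.mem_center_iff.mpr fun g =>
      (Subring.mem_centralizer_iff.mp (h g) x rfl).symm) hx
  have hxE : x ∈ Subring.centralizer ({x, y} : Set D) := by
    rw [Subring.mem_centralizer_iff]
    rintro g (rfl | rfl)
    · rfl
    · exact hy.symm
  rcases centralizer_dim_aux D ℓ hℓ hdim {x, y} x hxE hx with h | hE
  · exact Subring.mem_centralizer_iff.mp (h z) y (by simp)
  · haveI : FiniteDimensional (Subring.center D) (centralizerSubmodule D ({x} : Set D)) :=
      FiniteDimensional.of_finrank_pos (by rw [hC]; exact hℓ.pos)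
    have hle : centralizerSubmodule D ({x, y} : Set D) ≤ centralizerSubmodule D ({x} : Set D) :=
      fun d hd => Subring.centralizer_le _ _ (by simp) hd
    have heq := Submodule.eq_of_le_of_finrank_eq hle (hE.trans hC.symm)
    have hzC : z ∈ centralizerSubmodule D ({x} : Set D) := by
      rw [mem_centralizerSubmodule_iff, Subring.mem_centralizer_iff]
      rintro g rfl; exact hz
    rw [← heq, mem_centralizerSubmodule_iff, Subring.mem_centralizer_iff] at hzC
    exact hzC y (by simp)
end

section
/- Let p be a prime, K a p-adic field, and D a central division algebra over K of prime degree ℓ, i.e., a division ring with center K and dim_K D = ℓ². Regard D as a Lie algebra over K via ⁅a,b⁆ = ab − ba. Then the derived Lie subalgebra ⁅D,D⁆ is a CA Lie algebra over K. -/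
attribute [local instance 100] LieRing.ofAssociativeRing

/-! The trace of left multiplication vanishes on commutators and sends a scalar `c` to `ℓ² c`, so
in characteristic zero a nonzero element `x` of `⁅D, D⁆` is not central. A commutative subalgebra
of `D` is a field, so by the tower law its dimension divides `ℓ²`; if it contains the noncentral
`x` its dimension is neither `1` nor `ℓ²`, hence `ℓ`. For `y` commuting with `x` this forces
`K[x] = K[x, y]`, so the centralizer of `x` is the commutative algebra `K[x]`. -/

open Module

section Trace

variable {K D : Type*}

theorem trace_lmul_eq_zero_of_mem_derivedSeries_one [CommRing K] [Ring D] [Algebra K D]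
    [Module.Free K D] [Module.Finite K D] {x : D} (hx : x ∈ LieAlgebra.derivedSeries K D 1) :
    LinearMap.trace K D (Algebra.lmul K D x) = 0 := by
  replace hx : x ∈ Submodule.span K {⁅a, b⁆ | (a : D) (b : D)} := by
    rw [← LieAlgebra.coe_derivedSeries_one_eq]; exact hx
  induction hx using Submodule.span_induction with
  | mem _ h =>
    obtain ⟨a, b, rfl⟩ := h
    rw [Ring.lie_def, map_sub, map_sub, map_mul (Algebra.lmul K D), map_mul (Algebra.lmul K D),
      LinearMap.trace_mul_comm, sub_self]
  | zero => rw [map_zero, map_zero]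
  | add a b _ _ ha hb => rw [map_add, map_add, ha, hb, add_zero]
  | smul c a _ ha => rw [map_smul, map_smul, ha, smul_zero]

theorem trace_lmul_algebraMap [CommRing K] [Ring D] [Algebra K D]
    [Module.Free K D] [Module.Finite K D] (c : K) :
    LinearMap.trace K D (Algebra.lmul K D (algebraMap K D c)) = c * finrank K D := by
  rw [AlgHom.commutes, Algebra.algebraMap_eq_smul_one, map_smul, Module.End.one_eq_id,
    LinearMap.trace_id, smul_eq_mul]

theorem notMem_center_of_mem_derivedSeries_one [Field K] [Ring D] [Algebra K D]
    [FiniteDimensional K D] (hcentral : Subalgebra.center K D = ⊥)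
    (hchar : (finrank K D : K) ≠ 0) {x : D} (hx : x ∈ LieAlgebra.derivedSeries K D 1)
    (hx0 : x ≠ 0) : x ∉ Subalgebra.center K D := by
  rw [hcentral, Algebra.mem_bot]
  rintro ⟨c, rfl⟩
  have htrace := trace_lmul_eq_zero_of_mem_derivedSeries_one hx
  rw [trace_lmul_algebraMap, mul_eq_zero, or_iff_left hchar] at htrace
  exact hx0 (by rw [htrace, map_zero])

end Trace

section PrimeDegree

open scoped IsMulCommutative

variable {K D : Type*} [Field K] [DivisionRing D] [Algebra K D] [FiniteDimensional K D]
  {ℓ : ℕ}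

theorem Subalgebra.finrank_eq_of_isMulCommutative (hℓ : ℓ.Prime)
    (hdim : finrank K D = ℓ ^ 2) (A : Subalgebra K D) [IsMulCommutative A]
    {x : D} (hxA : x ∈ A) (hx : x ∉ Subalgebra.center K D) : finrank K A = ℓ := by
  let _ : Field A := fieldOfFiniteDimensional K A
  have hdvd : finrank K A ∣ ℓ ^ 2 := ⟨finrank A D, by rw [finrank_mul_finrank, hdim]⟩
  obtain ⟨i, hi, hA⟩ := (Nat.dvd_prime_pow hℓ).1 hdvd
  interval_cases i
  · rw [pow_zero, Subalgebra.finrank_eq_one_iff] at hA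
    exact absurd ((bot_le : ⊥ ≤ Subalgebra.center K D) (hA ▸ hxA)) hx
  · exact pow_one ℓ ▸ hA
  · have htop : A = ⊤ := Subalgebra.eq_of_le_of_finrank_eq le_top <| by
      rw [hA, Subalgebra.topEquiv.toLinearEquiv.finrank_eq, hdim]
    refine absurd (Subalgebra.mem_center_iff.2 fun b => ?_) hx
    have hb : b ∈ A := htop ▸ Algebra.mem_top
    exact congrArg Subtype.val (mul_comm (⟨b, hb⟩ : A) ⟨x, hxA⟩)

theorem mem_adjoin_singleton_of_commute (hℓ : ℓ.Prime) (hdim : finrank K D = ℓ ^ 2) {x y : D}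
    (hx : x ∉ Subalgebra.center K D) (hxy : Commute x y) : y ∈ Algebra.adjoin K {x} := by
  have : IsMulCommutative (Algebra.adjoin K {x, y}) := Algebra.isMulCommutative_adjoin K <| by
    rintro a (rfl | rfl) b (rfl | rfl) <;> first | rfl | exact hxy | exact hxy.symm
  have hle : Algebra.adjoin K {x} ≤ Algebra.adjoin K {x, y} :=
    Algebra.adjoin_mono (Set.singleton_subset_iff.2 (Set.mem_insert x _))
  have hxmem (s : Set D) (hs : x ∈ s) : x ∈ Algebra.adjoin K s := Algebra.subset_adjoin hs
  have heq := Subalgebra.eq_of_le_of_finrank_eq hle <| by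
    rw [(Algebra.adjoin K {x}).finrank_eq_of_isMulCommutative hℓ hdim (hxmem _ rfl) hx,
      (Algebra.adjoin K {x, y}).finrank_eq_of_isMulCommutative hℓ hdim (hxmem _ (.inl rfl)) hx]
  exact heq ▸ Algebra.subset_adjoin (Set.mem_insert_of_mem x rfl)

theorem commute_of_commute_of_notMem_center (hℓ : ℓ.Prime) (hdim : finrank K D = ℓ ^ 2)
    {x y z : D} (hx : x ∉ Subalgebra.center K D)
    (hxy : Commute x y) (hxz : Commute x z) : Commute y z :=
  Algebra.commute_of_mem_adjoin_singleton_of_commute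
    (mem_adjoin_singleton_of_commute hℓ hdim hx hxz) hxy.symm

theorem LieIdeal.isCA_of_forall_notMem_center (hℓ : ℓ.Prime) (hdim : finrank K D = ℓ ^ 2)
    (I : LieIdeal K D)
    (hI : ∀ x ∈ I, x ≠ 0 → x ∉ Subalgebra.center K D) : IsCA I := by
  intro x hx y z hxy hxz
  simp only [Subtype.ext_iff, LieSubmodule.coe_zero, LieIdeal.coe_bracket_of_module] at hxy hxz ⊢
  have hx_center : (x : D) ∉ Subalgebra.center K D := hI x x.2 fun h => hx (Subtype.ext h)
  exact commute_iff_lie_eq.1 <| commute_of_commute_of_notMem_center hℓ hdim hx_center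
    (commute_iff_lie_eq.2 hxy) (commute_iff_lie_eq.2 hxz)

end PrimeDegree

theorem derived_subalgebra_of_prime_degree_division_algebra_isCA_general
    (p : ℕ) [Fact p.Prime] (K : Type*) [Field K] [Algebra ℚ_[p] K]
    (D : Type*) [DivisionRing D] [Algebra K D]
    (hcentral : Subalgebra.center K D = ⊥)
    (ℓ : ℕ) (hℓ : ℓ.Prime) (hdim : Module.finrank K D = ℓ ^ 2) :
    IsCA (LieAlgebra.derivedSeries K D 1) := by
  have : CharZero K := charZero_of_injective_algebraMap (algebraMap ℚ_[p] K).injective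
  have hdim_pos : 0 < finrank K D := hdim ▸ pow_pos hℓ.pos 2
  have : FiniteDimensional K D := .of_finrank_pos hdim_pos
  exact LieIdeal.isCA_of_forall_notMem_center hℓ hdim _ fun x hx hx0 =>
    notMem_center_of_mem_derivedSeries_one hcentral (Nat.cast_ne_zero.2 hdim_pos.ne') hx hx0

theorem derived_subalgebra_of_prime_degree_division_algebra_isCA
    (p : ℕ) [Fact p.Prime] (K : Type*) [Field K] [Algebra ℚ_[p] K]
    [FiniteDimensional ℚ_[p] K]
    (D : Type*) [DivisionRing D] [Algebra K D]
    (hcentral : Subalgebra.center K D = ⊥)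
    (ℓ : ℕ) (hℓ : ℓ.Prime) (hdim : Module.finrank K D = ℓ ^ 2) :
    IsCA (LieAlgebra.derivedSeries K D 1) :=
  derived_subalgebra_of_prime_degree_division_algebra_isCA_general p K D hcentral ℓ hℓ hdim
end

section
/- Let p be a prime and k a p-adic field. If L is a finite-dimensional Lie algebra over k which is CA, then for every Lie ideal I of L the quotient Lie algebra L/I is also CA. -/
section CAProof

open Module LieSubalgebra

variable {k : Type*} [Field k] [Infinite k]

/-- The key technical lemma: in a finite-dimensional CA Lie algebra over a large field,
for any Lie ideal `I` and any `x ∉ I`, if `⁅x,y⁆, ⁅x,z⁆ ∈ I` then `⁅y,z⁆ ∈ I`. -/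
lemma ca_master (n : ℕ) :
    ∀ (L : Type _) [LieRing L] [LieAlgebra k L] [Module.Finite k L],
      Module.finrank k L ≤ n → IsCA L →
        ∀ (I : LieIdeal k L) (x y z : L),
          x ∉ I → ⁅x, y⁆ ∈ I → ⁅x, z⁆ ∈ I → ⁅y, z⁆ ∈ I := by
  induction n with
  | zero =>
      intro L _ _ _ hrank hCA I x y z hx hxy hxz
      haveI : Subsingleton L := by
        have h0 : Module.finrank k L = 0 := Nat.le_zero.mp hrank
        exact Module.finrank_zero_iff.mp h0
      exact absurd ((Subsingleton.elim (0 : L) x) ▸ I.zero_mem) hx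
  | succ n ih =>
      intro L _ _ _ hrank hCA I x y z hx hxy hxz
      rcases subsingleton_or_nontrivial L with hL | hL
      · exact absurd ((Subsingleton.elim (0 : L) x) ▸ I.zero_mem) hx
      obtain ⟨x₀, hx₀⟩ := LieAlgebra.exists_isCartanSubalgebra_engel k L
      haveI : (engel k x₀).IsCartanSubalgebra := hx₀
      set f : Module.End k L := LieAlgebra.ad k L x₀ with hfdef
      set H : LieSubalgebra k L := engel k x₀ with hHdef
      have hmemH : ∀ v : L, v ∈ H ↔ ∃ m : ℕ, (f ^ m) v = 0 := fun v =>
        mem_engel_iff k x₀ v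
      set E : Submodule k L := ⨅ m : ℕ, LinearMap.range (f ^ m) with hEdef
      -- Fitting decomposition of `L` with respect to `ad x₀`.
      have hker_mono : Monotone fun m : ℕ => LinearMap.ker (f ^ m) := by
        intro a b hab v hv
        rw [LinearMap.mem_ker] at hv ⊢
        rw [← Nat.sub_add_cancel hab, pow_add, Module.End.mul_apply, hv, map_zero]
      have hcompl : IsCompl (H : Submodule k L) E := by
        have h1 : (H : Submodule k L) = ⨆ m : ℕ, LinearMap.ker (f ^ m) := by
          ext v
          rw [Submodule.mem_iSup_of_directed _ hker_mono.directed_le,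
            LieSubalgebra.mem_toSubmodule, hmemH]
          simp only [LinearMap.mem_ker]
        rw [h1, hEdef]
        exact LinearMap.isCompl_iSup_ker_pow_iInf_range_pow f
      -- A nonzero element of `H`.
      obtain ⟨h₁, hh₁H, hh₁ne⟩ : ∃ h₁ : L, h₁ ∈ H ∧ h₁ ≠ 0 := by
        by_contra hcon
        push_neg at hcon
        have hx₀0 : x₀ = 0 := hcon x₀ (self_mem_engel k x₀)
        obtain ⟨v, hvne⟩ := exists_ne (0 : L)
        refine hvne (hcon v ?_)
        rw [hmemH]
        exact ⟨1, by simp [hfdef, hx₀0, LieAlgebra.ad_apply]⟩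
      -- A nonzero central element `z'` of the Cartan subalgebra `H`.
      haveI : Nontrivial H := nontrivial_of_ne (⟨h₁, hh₁H⟩ : H) 0
        (by simp [Subtype.ext_iff, hh₁ne])
      haveI : Nontrivial (LieAlgebra.center k H) := LieAlgebra.non_trivial_center_of_isNilpotent (R := k) (L := H)
      obtain ⟨zc, hzcne⟩ := exists_ne (0 : LieAlgebra.center k H)
      set z' : L := ((zc : H) : L) with hz'def
      have hz'H : z' ∈ H := (zc : H).2
      have hz'ne : z' ≠ 0 := by
        intro h0
        exact hzcne (Subtype.ext (Subtype.ext h0))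
      have hz'c : ∀ h ∈ H, ⁅h, z'⁆ = (0 : L) := by
        intro h hh
        have h2 := (LieModule.mem_maxTrivSubmodule k H H (zc : H)).mp zc.2
        have h3 := h2 ⟨h, hh⟩
        have h4 := congrArg (fun w : H => (w : L)) h3
        simpa using h4
      -- Since `L` is CA, `H` is abelian and is the centralizer of each of its
      -- nonzero elements.
      have habH : ∀ a ∈ H, ∀ b ∈ H, ⁅a, b⁆ = (0 : L) := by
        intro a ha b hb
        refine hCA z' hz'ne a b ?_ ?_
        · rw [← lie_skew, hz'c a ha, neg_zero]
        · rw [← lie_skew, hz'c b hb, neg_zero]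
      have hCz : ∀ v : L, ⁅z', v⁆ = 0 → v ∈ H := by
        intro v hv
        have hnorm : v ∈ H.normalizer := by
          rw [LieSubalgebra.mem_normalizer_iff]
          intro u hu
          have h1 : ⁅z', u⁆ = 0 := by rw [← lie_skew, hz'c u hu, neg_zero]
          rw [hCA z' hz'ne v u hv h1]
          exact H.zero_mem
        rwa [LieSubalgebra.IsCartanSubalgebra.self_normalizing] at hnorm
      have hblock : ∀ h ∈ H, h ≠ (0 : L) → ∀ v : L, ⁅h, v⁆ = 0 → v ∈ H := by
        intro h hh hne v hv
        apply hCz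
        rw [← lie_skew, hCA h hne v z' hv (hz'c h hh), neg_zero]
      -- `E` is stable under bracketing with elements of `H`.
      have hHE : ∀ h : L, h ∈ H → ∀ e ∈ E, ⁅h, e⁆ ∈ E := by
        intro h hh e he
        have h0 : ⁅x₀, h⁆ = 0 := by
          rw [← lie_skew, habH h hh x₀ (self_mem_engel k x₀), neg_zero]
        have hcomm : ∀ (m : ℕ) (u : L), (f ^ m) ⁅h, u⁆ = ⁅h, (f ^ m) u⁆ := by
          intro m
          induction m with
          | zero => intro u; simp
          | succ m ihm =>
              intro u
              have hstep : f ⁅h, u⁆ = ⁅h, f u⁆ := by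
                simp only [hfdef, LieAlgebra.ad_apply]
                rw [leibniz_lie, h0, zero_lie, zero_add]
              rw [pow_succ, Module.End.mul_apply, Module.End.mul_apply, hstep, ihm (f u)]
        rw [hEdef, Submodule.mem_iInf] at he ⊢
        intro m
        obtain ⟨u, hu⟩ := LinearMap.mem_range.mp (he m)
        rw [LinearMap.mem_range]
        exact ⟨⁅h, u⁆, by rw [hcomm m u, hu]⟩
      -- decomposition of elements of `L`
      have hdecomp : ∀ v : L, ∃ a, a ∈ H ∧ ∃ b, b ∈ E ∧ v = a + b := by
        intro v
        have hv : v ∈ (H : Submodule k L) ⊔ E := by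
          rw [hcompl.sup_eq_top]; exact Submodule.mem_top
        obtain ⟨a, ha, b, hb, hab⟩ := Submodule.mem_sup.mp hv
        exact ⟨a, (LieSubalgebra.mem_toSubmodule H).mp ha, b, hb, hab.symm⟩
      have hdisjHE : ∀ v : L, v ∈ H → v ∈ E → v = 0 := by
        intro v hvH hvE
        exact Submodule.disjoint_def.mp hcompl.disjoint v
          ((LieSubalgebra.mem_toSubmodule H).mpr hvH) hvE
      have hadL : ∀ h : L, h ∈ H → ∀ v : L, ⁅h, v⁆ ∈ E := by
        intro h hh v
        obtain ⟨a, ha, b, hb, hab⟩ := hdecomp v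
        rw [hab, lie_add, habH h hh a ha, zero_add]
        exact hHE h hh b hb
      -- Each nonzero `h ∈ H` acts bijectively on `E`.
      have hsurjE : ∀ h : L, h ∈ H → h ≠ 0 → ∀ e ∈ E, ∃ e' ∈ E, ⁅h, e'⁆ = e := by
        intro h hh hne
        have hrestr : ∀ v ∈ E, (LieAlgebra.ad k L h) v ∈ E := by
          intro v hv; rw [LieAlgebra.ad_apply]; exact hHE h hh v hv
        set g := (LieAlgebra.ad k L h).restrict hrestr with hgdef
        have hker : LinearMap.ker g = ⊥ := by
          rw [_root_.eq_bot_iff]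
          intro a ha
          rw [LinearMap.mem_ker] at ha
          have h5 : ⁅h, (a : L)⁆ = 0 := by
            have h6 := congrArg Subtype.val ha
            simpa [hgdef, LinearMap.restrict_coe_apply, LieAlgebra.ad_apply] using h6
          have h7 : (a : L) ∈ H := hblock h hh hne _ h5
          rw [Submodule.mem_bot]
          exact Subtype.ext (hdisjHE _ h7 a.2)
        have hsurj := LinearMap.injective_iff_surjective.mp (LinearMap.ker_eq_bot.mp hker)
        intro e he
        obtain ⟨e', he'⟩ := hsurj ⟨e, he⟩
        refine ⟨(e' : L), e'.2, ?_⟩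
        have h8 := congrArg Subtype.val he'
        simpa [hgdef, LinearMap.restrict_coe_apply, LieAlgebra.ad_apply] using h8
      -- The final computation, valid whenever `E ⊆ I`.
      have hfinish : (∀ e ∈ E, e ∈ I) → ⁅y, z⁆ ∈ I := by
        intro hEI
        obtain ⟨a, ha, b, hb, hy'⟩ := hdecomp y
        obtain ⟨a', ha', b', hb', hz2⟩ := hdecomp z
        rw [hy', hz2, add_lie, lie_add, lie_add]
        refine add_mem (add_mem ?_ ?_) (add_mem ?_ ?_)
        · rw [habH a ha a' ha']; exact I.zero_mem
        · exact hEI _ (hHE a ha b' hb')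
        · rw [← lie_skew]; exact neg_mem (hEI _ (hHE a' ha' b hb))
        · exact I.lie_mem (hEI b' hb')
      by_cases hIH : ∃ v : L, v ∈ I ∧ v ∈ H ∧ v ≠ 0
      · -- `I` meets `H`: then `E ⊆ I` and we are done.
        obtain ⟨v, hvI, hvH, hvne⟩ := hIH
        apply hfinish
        intro e he
        obtain ⟨e', _, hee⟩ := hsurjE v hvH hvne e he
        rw [← hee, ← lie_skew]
        exact neg_mem (I.lie_mem hvI)
      push_neg at hIH
      -- `I ∩ H = 0`, so `h₁` acts bijectively on `I` and `I ⊆ E`.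
      have hIker : ∀ w : L, w ∈ I → ⁅h₁, w⁆ = 0 → w = 0 := fun w hw hbr =>
        hIH w hw (hblock h₁ hh₁H hh₁ne w hbr)
      have hsurjI : ∀ w ∈ I, ∃ a ∈ I, ⁅h₁, a⁆ = w := by
        have hrestr : ∀ v ∈ I.toSubmodule, (LieAlgebra.ad k L h₁) v ∈
            I.toSubmodule := by
          intro v hv
          rw [LieSubmodule.mem_toSubmodule] at hv ⊢
          rw [LieAlgebra.ad_apply]
          exact I.lie_mem hv
        set g := (LieAlgebra.ad k L h₁).restrict hrestr with hgdef
        have hker : LinearMap.ker g = ⊥ := by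
          rw [_root_.eq_bot_iff]
          intro a ha
          rw [LinearMap.mem_ker] at ha
          have h5 : ⁅h₁, (a : L)⁆ = 0 := by
            have h6 := congrArg Subtype.val ha
            simpa [hgdef, LinearMap.restrict_coe_apply, LieAlgebra.ad_apply] using h6
          rw [Submodule.mem_bot]
          refine Subtype.ext (hIker _ ?_ h5)
          exact (LieSubmodule.mem_toSubmodule I).mp a.2
        have hsurj := LinearMap.injective_iff_surjective.mp (LinearMap.ker_eq_bot.mp hker)
        intro w hw
        obtain ⟨a, ha⟩ := hsurj ⟨w, (LieSubmodule.mem_toSubmodule I).mpr hw⟩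
        refine ⟨(a : L), (LieSubmodule.mem_toSubmodule I).mp a.2, ?_⟩
        have h8 := congrArg Subtype.val ha
        simpa [hgdef, LinearMap.restrict_coe_apply, LieAlgebra.ad_apply] using h8
      have hIE : ∀ w ∈ I, w ∈ E := by
        intro w hw
        obtain ⟨a, _, haa⟩ := hsurjI w hw
        rw [← haa]
        exact hadL h₁ hh₁H a
      by_cases hV : ∀ v : L, ⁅x, v⁆ ∈ I
      · -- `⁅x, L⁆ ⊆ I`; then `E = I` and we conclude.
        obtain ⟨xH, hxH, xE, hxE, hxdec⟩ := hdecomp x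
        have h1 : ⁅h₁, xE⁆ ∈ I := by
          have h2 : ⁅x, h₁⁆ ∈ I := hV h₁
          rw [hxdec, add_lie, habH xH hxH h₁ hh₁H, zero_add] at h2
          rw [← lie_skew]
          exact neg_mem h2
        obtain ⟨a, haI, haa⟩ := hsurjI _ h1
        have hxEI : xE ∈ I := by
          have hsubH : xE - a ∈ H := by
            apply hblock h₁ hh₁H hh₁ne
            rw [lie_sub, haa, sub_self]
          have hsubE : xE - a ∈ E := E.sub_mem hxE (hIE a haI)
          have h0 : xE - a = 0 := hdisjHE _ hsubH hsubE
          rw [sub_eq_zero] at h0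
          rw [h0]; exact haI
        have hxHne : xH ≠ 0 := by
          intro h0
          apply hx
          rw [hxdec, h0, zero_add]
          exact hxEI
        apply hfinish
        intro e he
        obtain ⟨e', _, hee⟩ := hsurjE xH hxH hxHne e he
        have hxH' : xH = x - xE := by rw [hxdec]; abel
        rw [← hee, hxH', sub_lie]
        refine sub_mem (hV e') ?_
        rw [← lie_skew]
        exact neg_mem (I.lie_mem hxEI)
      · -- Otherwise pass to the proper subalgebra `V = {v | ⁅x,v⁆ ∈ I}` and recurse.
        push_neg at hV
        obtain ⟨v₀, hv₀⟩ := hV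
        let Vs : Submodule k L :=
          { carrier := {v : L | ⁅x, v⁆ ∈ I}
            add_mem' := by
              intro a b ha hb
              simp only [Set.mem_setOf_eq, lie_add] at *
              exact add_mem ha hb
            zero_mem' := by
              simp only [Set.mem_setOf_eq, lie_zero]
              exact I.zero_mem
            smul_mem' := by
              intro c a ha
              simp only [Set.mem_setOf_eq, lie_smul] at *
              exact (LieSubmodule.mem_toSubmodule I).mp
                (I.toSubmodule.smul_mem c ((LieSubmodule.mem_toSubmodule I).mpr ha)) }
        let V : LieSubalgebra k L :=
          { Vs with
            lie_mem' := by
              intro a b ha hb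
              show ⁅x, ⁅a, b⁆⁆ ∈ I
              rw [leibniz_lie]
              refine add_mem ?_ (I.lie_mem hb)
              rw [← lie_skew]
              exact neg_mem (I.lie_mem ha) }
        have hVmem : ∀ v : L, v ∈ V ↔ ⁅x, v⁆ ∈ I := fun v => Iff.rfl
        have hVx : x ∈ V := by rw [hVmem, lie_self]; exact I.zero_mem
        have hVy : y ∈ V := hxy
        have hVz : z ∈ V := hxz
        have hVsne : Vs ≠ ⊤ := by
          intro htop
          exact hv₀ (htop ▸ Submodule.mem_top : v₀ ∈ Vs)
        haveI : Module.Finite k Vs := inferInstance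
        haveI : Module.Finite k V := inferInstanceAs (Module.Finite k Vs)
        have hrankV : Module.finrank k V ≤ n := by
          have h1 : Module.finrank k Vs < Module.finrank k L :=
            Submodule.finrank_lt hVsne
          have h2 : Module.finrank k V = Module.finrank k Vs := rfl
          omega
        have hCAV : IsCA V := by
          intro v hvne a b hva hvb
          have hvne' : (v : L) ≠ 0 := fun h => hvne (Subtype.ext h)
          have h1 : ⁅(v : L), (a : L)⁆ = 0 := by
            rw [← LieSubalgebra.coe_bracket, hva, ZeroMemClass.coe_zero]
          have h2 : ⁅(v : L), (b : L)⁆ = 0 := by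
            rw [← LieSubalgebra.coe_bracket, hvb, ZeroMemClass.coe_zero]
          have h3 := hCA (v : L) hvne' (a : L) (b : L) h1 h2
          exact Subtype.ext (by rw [LieSubalgebra.coe_bracket, h3, ZeroMemClass.coe_zero])
        let I' : LieIdeal k V :=
          { carrier := {w : V | (w : L) ∈ I}
            add_mem' := by
              intro a b ha hb
              simp only [Set.mem_setOf_eq] at *
              rw [Submodule.coe_add]
              exact add_mem ha hb
            zero_mem' := by
              simp only [Set.mem_setOf_eq, ZeroMemClass.coe_zero]
              exact I.zero_mem
            smul_mem' := by
              intro c a ha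
              simp only [Set.mem_setOf_eq] at *
              rw [Submodule.coe_smul]
              exact (LieSubmodule.mem_toSubmodule I).mp
                (I.toSubmodule.smul_mem c ((LieSubmodule.mem_toSubmodule I).mpr ha))
            lie_mem := by
              intro u m hm
              simp only [Set.mem_setOf_eq] at *
              rw [LieSubalgebra.coe_bracket]
              exact I.lie_mem hm }
        have hI'mem : ∀ w : V, w ∈ I' ↔ (w : L) ∈ I := fun w => Iff.rfl
        have hres := ih V hrankV hCAV I' ⟨x, hVx⟩ ⟨y, hVy⟩ ⟨z, hVz⟩
          (fun h => hx ((hI'mem _).mp h))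
          ((hI'mem _).mpr (by rw [LieSubalgebra.coe_bracket]; exact hxy))
          ((hI'mem _).mpr (by rw [LieSubalgebra.coe_bracket]; exact hxz))
        have h9 := (hI'mem _).mp hres
        rwa [LieSubalgebra.coe_bracket] at h9

end CAProof

theorem quotient_of_CA_isCA
    (p : ℕ) [Fact p.Prime] (k : Type*) [Field k] [Algebra ℚ_[p] k]
    [FiniteDimensional ℚ_[p] k]
    (L : Type*) [LieRing L] [LieAlgebra k L] [Module.Finite k L]
    (hCA : IsCA L) (I : LieIdeal k L) :
    IsCA (L ⧸ I) := by
  haveI : CharZero k := charZero_of_injective_algebraMap (algebraMap ℚ_[p] k).injective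
  intro X hX Y Z hXY hXZ
  obtain ⟨x, rfl⟩ := LieSubmodule.Quotient.surjective_mk' I X
  obtain ⟨y, rfl⟩ := LieSubmodule.Quotient.surjective_mk' I Y
  obtain ⟨z, rfl⟩ := LieSubmodule.Quotient.surjective_mk' I Z
  have hx : x ∉ I := by
    intro h
    exact hX ((LieSubmodule.Quotient.mk_eq_zero I).mpr h)
  have hxy : ⁅x, y⁆ ∈ I := by
    have h1 : LieSubmodule.Quotient.mk (N := I) ⁅x, y⁆ = 0 := by
      rw [LieSubmodule.Quotient.mk_bracket]
      exact hXY
    exact (LieSubmodule.Quotient.mk_eq_zero').mp h1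
  have hxz : ⁅x, z⁆ ∈ I := by
    have h1 : LieSubmodule.Quotient.mk (N := I) ⁅x, z⁆ = 0 := by
      rw [LieSubmodule.Quotient.mk_bracket]
      exact hXZ
    exact (LieSubmodule.Quotient.mk_eq_zero').mp h1
  have h := ca_master (k := k) (Module.finrank k L) L le_rfl hCA I x y z hx hxy hxz
  have h2 : LieSubmodule.Quotient.mk (N := I) ⁅y, z⁆ = 0 :=
    (LieSubmodule.Quotient.mk_eq_zero').mpr h
  rw [LieSubmodule.Quotient.mk_bracket] at h2
  exact h2
end

section
/- Let K be a field of characteristic ≠ 2 and let a, b ∈ K be nonzero. Let Q = ℍ[K,a,b] be the quaternion algebra over K with basis 1, i, j, k, relations i² = a, j² = b, ij = −ji = k. If x, y, z ∈ Q are nonzero elements with zero real part (pure quaternions) such that xy = yx and yz = zy, then xz = zx. In other words, commutation is transitive on nonzero pure quaternions. -/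
open Quaternion

theorem pure_quaternion_commute_transitive
    (K : Type*) [Field K] (hchar : ringChar K ≠ 2)
    (a b : K) (ha : a ≠ 0) (hb : b ≠ 0)
    (x y z : ℍ[K, a, b])
    (hx0 : x ≠ 0) (hy0 : y ≠ 0) (hz0 : z ≠ 0)
    (hx : x.re = 0) (hy : y.re = 0) (hz : z.re = 0)
    (hxy : x * y = y * x) (hyz : y * z = z * y) :
    x * z = z * x := by
  have h2 : (2:K) ≠ 0 := Ring.two_ne_zero hchar
  -- extract cross-product equations
  have exI := congrArg QuaternionAlgebra.imI hxy
  have exJ := congrArg QuaternionAlgebra.imJ hxy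
  have exK := congrArg QuaternionAlgebra.imK hxy
  have eyI := congrArg QuaternionAlgebra.imI hyz
  have eyJ := congrArg QuaternionAlgebra.imJ hyz
  have eyK := congrArg QuaternionAlgebra.imK hyz
  simp only [QuaternionAlgebra.imI_mul, QuaternionAlgebra.imJ_mul,
    QuaternionAlgebra.imK_mul, hx, hy, hz, zero_mul, mul_zero, zero_add, add_zero] at exI exJ exK eyI eyJ eyK
  have cancel : ∀ c u v : K, c ≠ 0 → c * u = c * v → u = v := fun c u v hc h =>
    mul_left_cancel₀ hc h
  have pxy1 : x.imJ * y.imK = x.imK * y.imJ := by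
    apply cancel (2*b) _ _ (mul_ne_zero h2 hb); linear_combination -exI
  have pxy2 : x.imI * y.imK = x.imK * y.imI := by
    apply cancel (2*a) _ _ (mul_ne_zero h2 ha); linear_combination exJ
  have pxy3 : x.imI * y.imJ = x.imJ * y.imI := by
    apply cancel 2 _ _ h2; linear_combination exK
  have pyz1 : y.imJ * z.imK = y.imK * z.imJ := by
    apply cancel (2*b) _ _ (mul_ne_zero h2 hb); linear_combination -eyI
  have pyz2 : y.imI * z.imK = y.imK * z.imI := by
    apply cancel (2*a) _ _ (mul_ne_zero h2 ha); linear_combination eyJ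
  have pyz3 : y.imI * z.imJ = y.imJ * z.imI := by
    apply cancel 2 _ _ h2; linear_combination eyK
  have hyne : y.imI ≠ 0 ∨ y.imJ ≠ 0 ∨ y.imK ≠ 0 := by
    by_contra h
    push_neg at h
    exact hy0 (QuaternionAlgebra.ext hy h.1 h.2.1 h.2.2)
  -- transfer cross products
  have key : x.imJ * z.imK = x.imK * z.imJ ∧ x.imI * z.imK = x.imK * z.imI ∧
      x.imI * z.imJ = x.imJ * z.imI := by
    rcases hyne with h | h | h
    · refine ⟨cancel _ _ _ (mul_ne_zero h h) ?_, cancel _ _ _ h ?_, cancel _ _ _ h ?_⟩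
      · linear_combination x.imI * y.imJ * pyz2 - x.imI * y.imK * pyz3 -
          y.imI * z.imK * pxy3 + y.imI * z.imJ * pxy2
      · linear_combination x.imI * pyz2 + z.imI * pxy2
      · linear_combination x.imI * pyz3 + z.imI * pxy3
    · refine ⟨cancel _ _ _ h ?_, cancel _ _ _ (mul_ne_zero h h) ?_, cancel _ _ _ h ?_⟩
      · linear_combination x.imJ * pyz1 + z.imJ * pxy1
      · linear_combination x.imJ * y.imI * pyz1 + x.imJ * y.imK * pyz3 +
          y.imJ * z.imK * pxy3 + y.imJ * z.imI * pxy1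
      · linear_combination z.imJ * pxy3 + x.imJ * pyz3
    · refine ⟨cancel _ _ _ h ?_, cancel _ _ _ h ?_, cancel _ _ _ (mul_ne_zero h h) ?_⟩
      · linear_combination z.imK * pxy1 + x.imK * pyz1
      · linear_combination z.imK * pxy2 + x.imK * pyz2
      · linear_combination -x.imK * y.imI * pyz1 + x.imK * y.imJ * pyz2 +
          y.imK * z.imJ * pxy2 - y.imK * z.imI * pxy1
  obtain ⟨q1, q2, q3⟩ := key
  apply QuaternionAlgebra.ext <;>
    simp only [QuaternionAlgebra.re_mul, QuaternionAlgebra.imI_mul,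
      QuaternionAlgebra.imJ_mul, QuaternionAlgebra.imK_mul, hx, hz, zero_mul, mul_zero,
      zero_add, add_zero]
  · ring
  · linear_combination -2 * b * q1
  · linear_combination 2 * a * q2
  · linear_combination 2 * q3
end

section
/- Let L be a Lie algebra over a field k which is CA. Let A be an abelian Lie ideal of L and let Q be a Lie subalgebra of L which is a simple Lie algebra, and suppose ⁅Q,A⁆ ≠ 0. Then the adjoint action of Q on A is fixed-point-free: for every nonzero q ∈ Q and every nonzero a ∈ A, one has ⁅q,a⁆ ≠ 0. -/
theorem simple_subalgebra_acts_fixedPointFreely_on_abelian_ideal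
    (k : Type*) [Field k] (L : Type*) [LieRing L] [LieAlgebra k L]
    (hCA : IsCA L)
    (A : LieIdeal k L) (hA : ∀ a ∈ A, ∀ b ∈ A, ⁅a, b⁆ = (0 : L))
    (Q : LieSubalgebra k L) [LieAlgebra.IsSimple k Q]
    (hQA : ∃ q ∈ Q, ∃ a ∈ A, ⁅q, a⁆ ≠ (0 : L)) :
    ∀ q ∈ Q, q ≠ 0 → ∀ a ∈ A, a ≠ 0 → ⁅q, a⁆ ≠ (0 : L) := by
  intro q hq hq0 a haA ha0 hqa
  -- the centralizer of `a` in `Q` is a Lie ideal of `Q`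
  let I : LieIdeal k Q :=
    { carrier := {x : Q | ⁅(x : L), a⁆ = 0}
      add_mem' := fun {x y} hx hy => by
        simp only [Set.mem_setOf_eq] at *
        rw [AddSubmonoid.coe_add, add_lie, hx, hy, add_zero]
      zero_mem' := by simp
      smul_mem' := fun c x hx => by
        simp only [Set.mem_setOf_eq] at *
        rw [show ((c • x : Q) : L) = c • (x : L) from rfl, smul_lie, hx, smul_zero]
      lie_mem := fun {y x} hx => by
        simp only [Set.mem_setOf_eq] at *
        have h1 : ⁅(a : L), (x : L)⁆ = 0 := by
          rw [← lie_skew, hx, neg_zero]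
        have h2 : ⁅(a : L), ⁅(y : L), a⁆⁆ = 0 :=
          hA a haA _ (A.lie_mem haA) 
        have h3 : ⁅(x : L), ⁅(y : L), a⁆⁆ = 0 := hCA a ha0 _ _ h1 h2
        have : (↑(⁅y, x⁆ : Q) : L) = ⁅(y : L), (x : L)⁆ := rfl
        rw [this, lie_lie, hx, lie_zero, h3, sub_zero] }
  have hqI : (⟨q, hq⟩ : Q) ∈ I := hqa
  have hne : I ≠ ⊥ := by
    intro h
    rw [h] at hqI
    exact hq0 (by simpa using congrArg Subtype.val ((LieSubmodule.mem_bot _).mp hqI))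
  have htop : I = ⊤ := (LieAlgebra.IsSimple.eq_bot_or_eq_top I).resolve_left hne
  -- so all of `Q` centralizes `a`, hence `Q` is abelian by CA: contradiction
  apply LieAlgebra.IsSimple.non_abelian (R := k) (L := Q)
  constructor
  intro x y
  have hx : ⁅(x : L), a⁆ = 0 := by
    have : x ∈ I := htop ▸ LieSubmodule.mem_top x; exact this
  have hy : ⁅(y : L), a⁆ = 0 := by
    have : y ∈ I := htop ▸ LieSubmodule.mem_top y; exact this
  have hax : ⁅a, (x : L)⁆ = 0 := by rw [← lie_skew, hx, neg_zero]
  have hay : ⁅a, (y : L)⁆ = 0 := by rw [← lie_skew, hy, neg_zero]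
  have := hCA a ha0 _ _ hax hay
  exact Subtype.ext this
end

section
/- Let D be a division ring whose center K (a field) satisfies dim_K D = ℓ² for some prime ℓ. Let g ∈ D with g ∉ K, and let F = C_D(g) be the centralizer of g in D. If h ∈ D is a nonzero element such that conjugation by h maps F into itself (hFh⁻¹ ⊆ F), then h^ℓ commutes with g. -/
open Module

lemma aux_orderOf_dvd {K F : Type*} [Field K] [Field F] [Algebra K F]
    [FiniteDimensional K F] (σ : F ≃ₐ[K] F) : orderOf σ ∣ finrank K F := by
  classical
  let H := Subgroup.zpowers σ
  have h1 : finrank (IntermediateField.fixedField H) F = Fintype.card H :=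
    (IntermediateField.finrank_fixedField_eq_card H).trans Nat.card_eq_fintype_card
  have h2 : Fintype.card H = orderOf σ := by
    rw [← Nat.card_eq_fintype_card, Nat.card_zpowers]
  have h3 : finrank K (IntermediateField.fixedField H) *
      finrank (IntermediateField.fixedField H) F = finrank K F :=
    finrank_mul_finrank _ _ _
  exact Dvd.intro_left _ (by rw [← h3, h1, h2])

set_option maxHeartbeats 1000000 in
set_option synthInstance.maxHeartbeats 200000 in
theorem pow_prime_commutes_of_conj_stabilizes_centralizer
    (D : Type*) [DivisionRing D] (ℓ : ℕ) (hℓ : ℓ.Prime)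
    (hdim : Module.finrank (Subring.center D) D = ℓ ^ 2)
    (g : D) (hg : g ∉ Subring.center D)
    (h : D) (hh : h ≠ 0)
    (hstab : ∀ y : D, g * y = y * g → g * (h * y * h⁻¹) = (h * y * h⁻¹) * g) :
    g * h ^ ℓ = h ^ ℓ * g := by
  classical
  set K := Subring.center D with hKdef
  have hcen : ∀ x : D, x ∈ Subring.centralizer ({g} : Set D) ↔ g * x = x * g := by
    intro x
    rw [Subring.mem_centralizer_iff]
    exact ⟨fun h2 => h2 g rfl, fun h2 m hm => by rwa [Set.mem_singleton_iff.mp hm]⟩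
  -- the centralizer as a subfield
  let F : Subfield D :=
    { Subring.centralizer ({g} : Set D) with
      inv_mem' := fun _ hx => Set.inv_mem_centralizer₀ hx }
  have hmemF : ∀ x : D, x ∈ F ↔ g * x = x * g := hcen
  have hgF : g ∈ F := (hmemF g).2 rfl
  have hKF : ∀ x : D, x ∈ K → x ∈ F := fun x hx =>
    Subring.center_le_centralizer ({g} : Set D) hx
  -- inverses of central elements are central
  have hKinv : ∀ x : D, x ∈ K → x⁻¹ ∈ K := by
    intro x hx
    rw [Subring.mem_center_iff] at hx ⊢
    intro a
    have : Commute a x := hx a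
    exact this.inv_right₀
  clear_value F
  letI : Algebra K F := RingHom.toAlgebra'
    ({ toFun := fun k => (⟨(k : D), hKF _ k.2⟩ : F)
       map_one' := rfl
       map_mul' := fun _ _ => rfl
       map_zero' := rfl
       map_add' := fun _ _ => rfl } : K →+* F)
    (fun c x => Subtype.ext ((Subring.mem_center_iff.mp c.2 (x : D)).symm))
  haveI : IsScalarTower K F D := ⟨fun x y z => mul_assoc (x : D) (y : D) z⟩
  haveI : FiniteDimensional K D :=
    FiniteDimensional.of_finrank_pos (by rw [hdim]; exact pow_pos hℓ.pos 2)
  let incl : F →ₗ[K] D :=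
    { toFun := Subtype.val
      map_add' := fun _ _ => rfl
      map_smul' := fun _ _ => rfl }
  haveI : FiniteDimensional K F :=
    FiniteDimensional.of_injective incl Subtype.val_injective
  have hmul : finrank K F * finrank F D = finrank K D := finrank_mul_finrank K F D
  have hm_dvd : finrank K F ∣ ℓ ^ 2 := Dvd.intro _ (by rw [hmul, hdim])
  have hm_ne1 : finrank K F ≠ 1 := by
    intro h1
    obtain ⟨v, hv0, hv⟩ := finrank_eq_one_iff'.mp h1
    obtain ⟨c1, hc1⟩ := hv 1
    obtain ⟨cg, hcg⟩ := hv ⟨g, hgF⟩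
    have hc1' : (c1 : D) * (v : D) = 1 := congrArg Subtype.val hc1
    have hcg' : (cg : D) * (v : D) = g := congrArg Subtype.val hcg
    have hveq : (v : D) = (c1 : D)⁻¹ := eq_inv_of_mul_eq_one_right hc1'
    have : g ∈ K := by
      rw [← hcg', hveq]
      exact Subring.mul_mem _ cg.2 (hKinv _ c1.2)
    exact hg this
  have hm_ne2 : finrank K F ≠ ℓ ^ 2 := by
    intro h2
    have hFD1 : finrank F D = 1 := by
      have hpos : 0 < ℓ ^ 2 := pow_pos hℓ.pos 2
      have heq : ℓ ^ 2 * finrank F D = ℓ ^ 2 := by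
        calc ℓ ^ 2 * finrank F D = finrank K F * finrank F D := by rw [h2]
        _ = finrank K D := hmul
        _ = ℓ ^ 2 := hdim
      exact Nat.eq_of_mul_eq_mul_left hpos (by rw [heq, mul_one])
    obtain ⟨v, hv0, hv⟩ := finrank_eq_one_iff'.mp hFD1
    obtain ⟨c1, hc1⟩ := hv 1
    have hc1' : (c1 : D) * v = 1 := hc1
    have hvF : v ∈ F := by
      have : v = (c1 : D)⁻¹ := eq_inv_of_mul_eq_one_right hc1'
      rw [this]
      exact F.inv_mem c1.2
    have hall : ∀ w : D, w ∈ F := by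
      intro w
      obtain ⟨c, hc⟩ := hv w
      have : (c : D) * v = w := hc
      rw [← this]
      exact F.mul_mem c.2 hvF
    exact hg (Subring.mem_center_iff.mpr fun a => ((hmemF a).1 (hall a)).symm)
  have hm : finrank K F = ℓ := by
    obtain ⟨i, hi2, hie⟩ := (Nat.dvd_prime_pow hℓ).mp hm_dvd
    interval_cases i
    · simp at hie; exact absurd hie hm_ne1
    · simpa using hie
    · exact absurd hie hm_ne2
  -- the center of F
  set Z := Subring.center F with hZdef
  have hgZ : (⟨g, hgF⟩ : F) ∈ Z :=
    Subring.mem_center_iff.mpr fun a => Subtype.ext ((hmemF a).1 a.2).symm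
  have hKZ : ∀ k : K, (⟨(k : D), hKF _ k.2⟩ : F) ∈ Z :=
    fun k => Subring.mem_center_iff.mpr fun a =>
      Subtype.ext (Subring.mem_center_iff.mp k.2 (a : D))
  letI : Algebra K Z := RingHom.toAlgebra
    ({ toFun := fun k => (⟨⟨(k : D), hKF _ k.2⟩, hKZ k⟩ : Z)
       map_one' := rfl
       map_mul' := fun _ _ => rfl
       map_zero' := rfl
       map_add' := fun _ _ => rfl } : K →+* Z)
  haveI : IsScalarTower K Z F := ⟨fun x y z => Subtype.ext (mul_assoc (x : D) ((y : F) : D) (z : D))⟩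
  let inclZ : Z →ₗ[K] F :=
    { toFun := Subtype.val
      map_add' := fun _ _ => rfl
      map_smul' := fun _ _ => rfl }
  haveI : FiniteDimensional K Z :=
    FiniteDimensional.of_injective inclZ Subtype.val_injective
  have hmulZ : finrank K Z * finrank Z F = ℓ := by
    rw [finrank_mul_finrank K Z F, hm]
  have hZ_ne1 : finrank K Z ≠ 1 := by
    intro h1
    obtain ⟨v, hv0, hv⟩ := finrank_eq_one_iff'.mp h1
    obtain ⟨c1, hc1⟩ := hv 1
    obtain ⟨cg, hcg⟩ := hv ⟨⟨g, hgF⟩, hgZ⟩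
    have hc1' : (c1 : D) * (((v : F)) : D) = 1 := congrArg (fun z : Z => ((z : F) : D)) hc1
    have hcg' : (cg : D) * (((v : F)) : D) = g := congrArg (fun z : Z => ((z : F) : D)) hcg
    have hveq : (((v : F)) : D) = (c1 : D)⁻¹ := eq_inv_of_mul_eq_one_right hc1'
    have : g ∈ K := by
      rw [← hcg', hveq]
      exact Subring.mul_mem _ cg.2 (hKinv _ c1.2)
    exact hg this
  have hZm : finrank K Z = ℓ := by
    have hdvd : finrank K Z ∣ ℓ := Dvd.intro _ hmulZ
    rcases hℓ.eq_one_or_self_of_dvd _ hdvd with h1 | h1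
    · exact absurd h1 hZ_ne1
    · exact h1
  have hZF1 : finrank Z F = 1 := by
    apply Nat.eq_of_mul_eq_mul_left hℓ.pos
    calc ℓ * finrank Z F = finrank K Z * finrank Z F := by rw [hZm]
    _ = ℓ := hmulZ
    _ = ℓ * 1 := (mul_one ℓ).symm
  have hZinv : ∀ x : F, x ∈ Z → x⁻¹ ∈ Z := by
    intro x hx
    rw [Subring.mem_center_iff] at hx ⊢
    intro a
    have : Commute a x := hx a
    exact this.inv_right₀
  have hallZ : ∀ w : F, w ∈ Z := by
    obtain ⟨v, hv0, hv⟩ := finrank_eq_one_iff'.mp hZF1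
    obtain ⟨c1, hc1⟩ := hv 1
    have hc1' : (c1 : F) * v = 1 := hc1
    have hvZ : v ∈ Z := by
      rw [eq_inv_of_mul_eq_one_right hc1']
      exact hZinv _ c1.2
    intro w
    obtain ⟨c, hc⟩ := hv w
    have : (c : F) * v = w := hc
    rw [← this]
    exact Subring.mul_mem _ c.2 hvZ
  letI : Field F :=
    { (inferInstance : DivisionRing F) with
      mul_comm := fun x y => Subring.mem_center_iff.mp (hallZ y) x }
  -- conjugation by h as a K-algebra automorphism of F
  have hconj_mem : ∀ x : F, h * (x : D) * h⁻¹ ∈ F := fun x =>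
    (hmemF _).2 (hstab _ ((hmemF _).1 x.2))
  have key : ∀ a b : D, h * (a * b) * h⁻¹ = (h * a * h⁻¹) * (h * b * h⁻¹) := by
    intro a b
    simp [mul_assoc, inv_mul_cancel_left₀ hh]
  let σ0 : F →ₐ[K] F :=
    { toFun := fun x => ⟨h * (x : D) * h⁻¹, hconj_mem x⟩
      map_one' := Subtype.ext (by simp [mul_inv_cancel₀ hh])
      map_mul' := fun x y => Subtype.ext (key (x : D) (y : D))
      map_zero' := Subtype.ext (by simp)
      map_add' := fun x y => Subtype.ext (by
        show h * ((x : D) + (y : D)) * h⁻¹ = h * (x : D) * h⁻¹ + h * (y : D) * h⁻¹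
        rw [mul_add, add_mul])
      commutes' := fun k => Subtype.ext (by
        show h * (k : D) * h⁻¹ = (k : D)
        rw [Subring.mem_center_iff.mp k.2 h, mul_assoc, mul_inv_cancel₀ hh, mul_one]) }
  have hinj : Function.Injective σ0 := by
    intro x y hxy
    have h1 : h * (x : D) * h⁻¹ = h * (y : D) * h⁻¹ := congrArg Subtype.val hxy
    have h2 : h * (x : D) = h * (y : D) :=
      mul_right_cancel₀ (inv_ne_zero hh) h1
    exact Subtype.ext (mul_left_cancel₀ hh h2)
  have hsurj0 : Function.Surjective σ0.toLinearMap :=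
    LinearMap.injective_iff_surjective.mp hinj
  have hsurj : Function.Surjective σ0 := fun y => hsurj0 y
  let σ : F ≃ₐ[K] F := AlgEquiv.ofBijective σ0 ⟨hinj, hsurj⟩
  have hord : orderOf σ ∣ ℓ := hm ▸ aux_orderOf_dvd σ
  have hσl : σ ^ ℓ = 1 := orderOf_dvd_iff_pow_eq_one.mp hord
  have hσ_apply : ∀ x : F, ((σ x : F) : D) = h * (x : D) * h⁻¹ := fun _ => rfl
  have hpow : ∀ (n : ℕ) (x : F), (((σ ^ n) x : F) : D) = h ^ n * (x : D) * (h⁻¹) ^ n := by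
    intro n
    induction n with
    | zero => intro x; simp
    | succ n ih =>
      intro x
      have hps : σ ^ (n + 1) = σ * σ ^ n := pow_succ' σ n
      have : ((σ ^ (n + 1)) x : F) = σ ((σ ^ n) x) := by rw [hps]; rfl
      rw [this, hσ_apply, ih]
      rw [pow_succ' h n, pow_succ h⁻¹ n]
      simp [mul_assoc]
  have hfix : (((σ ^ ℓ) ⟨g, hgF⟩ : F) : D) = g := by rw [hσl]; rfl
  have hcore : h ^ ℓ * g * (h⁻¹) ^ ℓ = g := by rw [← hpow ℓ ⟨g, hgF⟩, hfix]
  have hpne : h ^ ℓ ≠ 0 := pow_ne_zero _ hh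
  rw [inv_pow] at hcore
  calc g * h ^ ℓ = (h ^ ℓ * g * (h ^ ℓ)⁻¹) * h ^ ℓ := by rw [hcore]
  _ = h ^ ℓ * g := by rw [mul_assoc, inv_mul_cancel₀ hpne, mul_one]
end

section
/- Let G = ℤ₂ ⋉ ℤ₂ be the semidirect product of the additive group of 2-adic integers ℤ₂ acting on ℤ₂, where t ∈ ℤ₂ acts as the identity if t ≡ 0 (mod 2) and as inversion (negation) if t ≡ 1 (mod 2) (i.e., the action factors through ℤ₂ → ℤ/2ℤ with the nontrivial element acting by x ↦ −x). Then G is torsion-free (its only element of finite order is the identity) and G is not a CA group. -/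
open Multiplicative

/-- Negation of `ℤ₂`, viewed as a multiplicative automorphism of the
(multiplicatively written) additive group of 2-adic integers. -/
noncomputable def negAut : MulAut (Multiplicative ℤ_[2]) :=
  MulEquiv.inv (Multiplicative ℤ_[2])

lemma negAut_sq : negAut * negAut = 1 := by
  ext x
  exact inv_inv x

/-- The action of `ℤ₂` on `ℤ₂`: `t` acts as the identity if `t ≡ 0 (mod 2)`
and by negation if `t ≡ 1 (mod 2)`. -/
noncomputable def phi : Multiplicative ℤ_[2] →* MulAut (Multiplicative ℤ_[2]) where
  toFun t := if PadicInt.toZMod (t.toAdd) = 0 then 1 else negAut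
  map_one' := by simp
  map_mul' a b := by
    have hcases : ∀ x : ZMod 2, x = 0 ∨ x = 1 := by decide
    have hab : PadicInt.toZMod ((a * b).toAdd) =
        PadicInt.toZMod (a.toAdd) + PadicInt.toZMod (b.toAdd) := by
      rw [toAdd_mul, map_add]
    rcases hcases (PadicInt.toZMod (a.toAdd)) with ha | ha <;>
      rcases hcases (PadicInt.toZMod (b.toAdd)) with hb | hb <;>
        simp only [hab, ha, hb] <;> norm_num
    exact negAut_sq.symm

/-!
A torsion element of `N ⋊ G` maps to a torsion element of `G`, hence lies in the copy of `N`;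
so the product is torsion-free when both factors are. Since `2` acts trivially, `(0, 2)` is
central in `ℤ₂ ⋊ ℤ₂`, so its centralizer is the whole group, which is not abelian: `(0, 1)`
negates `(1, 0)`, and `-1 ≠ 1` in `ℤ₂`.
-/

namespace SemidirectProduct

variable {N G : Type*} [Group N] [Group G] {φ : G →* MulAut N}

theorem eq_one_of_isOfFinOrder [IsMulTorsionFree N] [IsMulTorsionFree G] {x : N ⋊[φ] G}
    (hx : IsOfFinOrder x) : x = 1 := by
  have hright : x.right = 1 := (rightHom.isOfFinOrder hx).eq_one'
  have hx_inl : inl x.left = x := by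
    rw [← inl_left_mul_inr_right x, hright, map_one, mul_one, left_inl]
  rw [← hx_inl, inl_injective.isOfFinOrder_iff (f := inl)] at hx
  rw [← hx_inl, hx.eq_one', map_one]

theorem commute_inl_inr_iff {n : N} {g : G} :
    Commute (inl n : N ⋊[φ] G) (inr g) ↔ φ g n = n := by
  rw [Commute, SemiconjBy, SemidirectProduct.ext_iff]
  simp [eq_comm]

end SemidirectProduct

lemma phi_ofAdd_two : phi (ofAdd (2 : ℤ_[2])) = 1 :=
  if_pos (by rw [toAdd_ofAdd, map_ofNat]; rfl)

lemma phi_ofAdd_one : phi (ofAdd (1 : ℤ_[2])) = negAut :=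
  if_neg (by rw [toAdd_ofAdd, map_one]; exact one_ne_zero)

lemma negAut_ofAdd_one_ne : negAut (ofAdd (1 : ℤ_[2])) ≠ ofAdd 1 :=
  fun h => one_ne_zero (ofAdd_eq_one.1 (inv_eq_self.1 h))

open SemidirectProduct in
/-- The semidirect product `ℤ₂ ⋉ ℤ₂` (written multiplicatively), where the
second factor acts on the first through reduction mod 2, the nontrivial
element acting by negation. It is torsion-free but not a CA-group. -/
theorem torsionFree_and_not_CA :
    (∀ g : SemidirectProduct (Multiplicative ℤ_[2]) (Multiplicative ℤ_[2]) phi,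
      IsOfFinOrder g → g = 1) ∧
    ¬ (∀ g : SemidirectProduct (Multiplicative ℤ_[2]) (Multiplicative ℤ_[2]) phi,
        g ≠ 1 → ∀ h₁ h₂ : SemidirectProduct (Multiplicative ℤ_[2]) (Multiplicative ℤ_[2]) phi,
          Commute g h₁ → Commute g h₂ → Commute h₁ h₂) := by
  refine ⟨fun _ => eq_one_of_isOfFinOrder, fun hCA => ?_⟩
  have hg : (inr (ofAdd 2) : Multiplicative ℤ_[2] ⋊[phi] Multiplicative ℤ_[2]) ≠ 1 := by
    rw [← map_one inr, inr_inj.ne, Ne, ofAdd_eq_one]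
    exact two_ne_zero
  have hg_inl : Commute (inr (ofAdd 2)) (inl (ofAdd 1) : Multiplicative ℤ_[2] ⋊[phi] _) :=
    (commute_inl_inr_iff.2 (by rw [phi_ofAdd_two]; rfl)).symm
  have hg_inr : Commute (inr (ofAdd 2)) (inr (ofAdd 1) : Multiplicative ℤ_[2] ⋊[phi] _) :=
    (Commute.all _ _).map inr
  have h := commute_inl_inr_iff.1 (hCA _ hg _ _ hg_inl hg_inr)
  rw [phi_ofAdd_one] at h
  exact negAut_ofAdd_one_ne h
end

section
/- Let D be a division ring whose center K (a field) satisfies dim_K D = ℓ² for some prime ℓ. Then every subgroup G of the unit group Dˣ that intersects the center trivially (every g ∈ G whose underlying element of D lies in K satisfies g = 1) is a CA group: the centralizer C_G(g) is abelian for every g ∈ G with g ≠ 1. -/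
set_option synthInstance.maxHeartbeats 1000000
set_option maxHeartbeats 1000000

open Module Algebra

/-- A commutative subalgebra of a finite-dimensional division algebra over its center is a
field, so the tower law applies. -/
private lemma aux_tower (D : Type*) [DivisionRing D]
    [FiniteDimensional (Subring.center D) D] (s : Set D)
    (hcomm : ∀ a ∈ s, ∀ b ∈ s, a * b = b * a) :
    finrank (Subring.center D) (adjoin (Subring.center D) s) *
      finrank (adjoin (Subring.center D) s) D = finrank (Subring.center D) D := by
  set K := Subring.center D
  letI : CommRing (adjoin K s) := adjoinCommRingOfComm K hcomm
  have hfield : IsField (adjoin K s) := by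
    refine ⟨⟨0, 1, zero_ne_one⟩, mul_comm, ?_⟩
    rintro ⟨a, ha⟩ h0
    have ha0 : a ≠ 0 := by simpa [Subtype.ext_iff] using h0
    have hint : IsIntegral K a := IsIntegral.of_finite K a
    exact ⟨⟨a⁻¹, hint.inv_mem ha⟩, Subtype.ext (mul_inv_cancel₀ ha0)⟩
  letI : Field (adjoin K s) := hfield.toField
  exact Module.finrank_mul_finrank K (adjoin K s) D

/-- Any two elements of the subalgebra generated by a pairwise-commuting set commute. -/
private lemma aux_comm {D : Type*} [DivisionRing D] (s : Set D)
    (hcomm : ∀ a ∈ s, ∀ b ∈ s, a * b = b * a) {a b : D}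
    (ha : a ∈ adjoin (Subring.center D) s) (hb : b ∈ adjoin (Subring.center D) s) :
    a * b = b * a := by
  have h := Algebra.adjoin_le_centralizer_centralizer (Subring.center D) s
  exact Set.centralizer_centralizer_comm_of_comm hcomm a (h ha) b (h hb)

theorem subgroup_of_units_of_prime_degree_division_algebra_isCA
    (D : Type*) [DivisionRing D] (ℓ : ℕ) (hℓ : ℓ.Prime)
    (hdim : Module.finrank (Subring.center D) D = ℓ ^ 2)
    (G : Subgroup Dˣ)
    (hG : ∀ g : Dˣ, g ∈ G → (g : D) ∈ Subring.center D → g = 1) :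
    ∀ g ∈ G, g ≠ 1 → ∀ h₁ ∈ G, ∀ h₂ ∈ G,
      Commute g h₁ → Commute g h₂ → Commute h₁ h₂ := by
  intro g hg hg1 h₁ hh₁ h₂ hh₂ hc1 hc2
  set K := Subring.center D with hK
  haveI : FiniteDimensional K D := by
    refine FiniteDimensional.of_finrank_pos ?_
    rw [hdim]
    exact pow_pos hℓ.pos 2
  have hx : (g : D) ∉ K := fun h => hg1 (hG g hg h)
  have hxy : (g : D) * (h₁ : D) = (h₁ : D) * (g : D) := by
    have := congrArg Units.val hc1
    simpa [Units.val_mul] using this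
  have hxz : (g : D) * (h₂ : D) = (h₂ : D) * (g : D) := by
    have := congrArg Units.val hc2
    simpa [Units.val_mul] using this
  suffices hyz : (h₁ : D) * (h₂ : D) = (h₂ : D) * (h₁ : D) by
    exact Units.ext (by rw [Units.val_mul, Units.val_mul, hyz])
  -- the three commuting generating sets
  have hcomm0 : ∀ a ∈ ({(g : D)} : Set D), ∀ b ∈ ({(g : D)} : Set D), a * b = b * a := by
    rintro a rfl b rfl; rfl
  have hcomm1 : ∀ a ∈ ({(g : D), (h₁ : D)} : Set D),
      ∀ b ∈ ({(g : D), (h₁ : D)} : Set D), a * b = b * a := by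
    rintro a (rfl | rfl) b (rfl | rfl)
    · rfl
    · exact hxy
    · exact hxy.symm
    · rfl
  have hcomm2 : ∀ a ∈ ({(g : D), (h₂ : D)} : Set D),
      ∀ b ∈ ({(g : D), (h₂ : D)} : Set D), a * b = b * a := by
    rintro a (rfl | rfl) b (rfl | rfl)
    · rfl
    · exact hxz
    · exact hxz.symm
    · rfl
  -- key dimension lemma
  have key : ∀ s : Set D, (∀ a ∈ s, ∀ b ∈ s, a * b = b * a) → (g : D) ∈ s →
      finrank K (adjoin K s) = ℓ ∨ (adjoin K s) = ⊤ := by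
    intro s hcs hxs
    have htower := aux_tower D s hcs
    rw [hdim] at htower
    have hdvd : finrank K (adjoin K s) ∣ ℓ ^ 2 := ⟨_, htower.symm⟩
    obtain ⟨i, hi2, hie⟩ := (Nat.dvd_prime_pow hℓ).mp hdvd
    interval_cases i
    · exfalso
      rw [pow_zero] at hie
      have hbot : adjoin K s = ⊥ := Subalgebra.eq_bot_of_finrank_one hie
      have hmem : (g : D) ∈ adjoin K s := subset_adjoin hxs
      rw [hbot, Algebra.mem_bot] at hmem
      obtain ⟨⟨c, hc⟩, rfl⟩ := hmem
      exact hx hc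
    · left; rwa [pow_one] at hie
    · right
      rw [← Algebra.toSubmodule_eq_top]
      refine Submodule.eq_top_of_finrank_eq ?_
      rw [Subalgebra.finrank_toSubmodule, hie, hdim]
  obtain h1 | h1 := key _ hcomm1 (Set.mem_insert _ _)
  · obtain h2 | h2 := key _ hcomm2 (Set.mem_insert _ _)
    · obtain h0 | h0 := key _ hcomm0 (Set.mem_singleton _)
      · -- all three have dimension ℓ, so the two-element adjoins equal adjoin {g}
        have hle1 : adjoin K {(g : D)} ≤ adjoin K {(g : D), (h₁ : D)} :=
          adjoin_mono (Set.singleton_subset_iff.mpr (Set.mem_insert _ _))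
        have hle2 : adjoin K {(g : D)} ≤ adjoin K {(g : D), (h₂ : D)} :=
          adjoin_mono (Set.singleton_subset_iff.mpr (Set.mem_insert _ _))
        have heq1 : Subalgebra.toSubmodule (adjoin K {(g : D)}) =
            Subalgebra.toSubmodule (adjoin K {(g : D), (h₁ : D)}) := by
          refine Submodule.eq_of_le_of_finrank_le hle1 ?_
          rw [Subalgebra.finrank_toSubmodule, Subalgebra.finrank_toSubmodule, h0, h1]
        have heq2 : Subalgebra.toSubmodule (adjoin K {(g : D)}) =
            Subalgebra.toSubmodule (adjoin K {(g : D), (h₂ : D)}) := by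
          refine Submodule.eq_of_le_of_finrank_le hle2 ?_
          rw [Subalgebra.finrank_toSubmodule, Subalgebra.finrank_toSubmodule, h0, h2]
        have hy : (h₁ : D) ∈ adjoin K {(g : D)} := by
          have : (h₁ : D) ∈ adjoin K {(g : D), (h₁ : D)} :=
            subset_adjoin (Set.mem_insert_of_mem _ (Set.mem_singleton _))
          rw [← Subalgebra.mem_toSubmodule, heq1, Subalgebra.mem_toSubmodule]
          exact this
        have hz : (h₂ : D) ∈ adjoin K {(g : D)} := by
          have : (h₂ : D) ∈ adjoin K {(g : D), (h₂ : D)} :=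
            subset_adjoin (Set.mem_insert_of_mem _ (Set.mem_singleton _))
          rw [← Subalgebra.mem_toSubmodule, heq2, Subalgebra.mem_toSubmodule]
          exact this
        exact aux_comm _ hcomm0 hy hz
      · -- adjoin {g} = ⊤
        exact aux_comm _ hcomm0 (h0 ▸ trivial) (h0 ▸ trivial)
    · -- adjoin {g, h₂} = ⊤
      have hy : (h₁ : D) ∈ adjoin K {(g : D), (h₂ : D)} := h2 ▸ trivial
      have hz : (h₂ : D) ∈ adjoin K {(g : D), (h₂ : D)} :=
        subset_adjoin (Set.mem_insert_of_mem _ (Set.mem_singleton _))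
      exact aux_comm _ hcomm2 hy hz
  · -- adjoin {g, h₁} = ⊤
    have hy : (h₁ : D) ∈ adjoin K {(g : D), (h₁ : D)} :=
      subset_adjoin (Set.mem_insert_of_mem _ (Set.mem_singleton _))
    have hz : (h₂ : D) ∈ adjoin K {(g : D), (h₁ : D)} := h1 ▸ trivial
    exact aux_comm _ hcomm1 hy hz
end

section
/- Let D be a division ring whose center K (a field) satisfies dim_K D = ℓ² for some prime ℓ, and assume that K contains no ℓ-th root of unity other than 1. Let G be a subgroup of Dˣ that intersects the center trivially (every g ∈ G whose underlying element of D lies in K satisfies g = 1). Then every centralizer in G is malnormal: for every g ∈ G with g ≠ 1 and every h ∈ G with h ∉ C_G(g), one has C_G(g) ∩ h C_G(g) h⁻¹ = {1}. In particular, G is a CSA group. -/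
set_option synthInstance.maxHeartbeats 400000
set_option maxHeartbeats 1000000

open Module
section CSAAux

variable {D : Type*} [DivisionRing D]

/-- centralizer of a set as a subfield of a division ring -/
def cent (s : Set D) : Subfield D where
  __ := Subring.centralizer s
  inv_mem' := fun _ hx => Set.inv_mem_centralizer₀ hx

lemma mem_cent {s : Set D} {x : D} : x ∈ cent s ↔ ∀ a ∈ s, a * x = x * a :=
  Subring.mem_centralizer_iff

/-- center as a subfield -/
def Kc (D : Type*) [DivisionRing D] : Subfield D where
  __ := Subring.center D
  inv_mem' := fun x hx => by
    have hx' : ∀ g : D, g * x = x * g := Subring.mem_center_iff.mp hx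
    show x⁻¹ ∈ Subring.center D
    rw [Subring.mem_center_iff]
    intro g
    rcases eq_or_ne x 0 with rfl | h0
    · simp
    · have : x⁻¹ * (x * g) * x⁻¹ = x⁻¹ * (g * x) * x⁻¹ := by rw [hx' g]
      rw [← mul_assoc, ← mul_assoc, inv_mul_cancel₀ h0, one_mul, mul_assoc,
        mul_inv_cancel₀ h0, mul_one] at this
      exact this

lemma mem_Kc {x : D} : x ∈ Kc D ↔ x ∈ Subring.center D := Iff.rfl

lemma finrank_Kc : finrank (Kc D) D = finrank (Subring.center D) D := rfl

lemma Kc_le_cent (s : Set D) : (Kc D : Set D) ⊆ cent s := fun x hx =>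
  mem_cent.mpr fun a _ => Subring.mem_center_iff.mp hx a

/-- a subfield `E'` as a module over a smaller subfield `E` -/
def midMod (E E' : Subfield D) (h : (E : Set D) ⊆ E') : Submodule E D where
  carrier := E'
  add_mem' := fun ha hb => add_mem ha hb
  zero_mem' := zero_mem _
  smul_mem' := fun c x hx => by
    show (c : D) * x ∈ E'
    exact mul_mem (h c.2) hx


lemma tower_eq (E E' : Subfield D) (h : (E : Set D) ⊆ E') [FiniteDimensional E D] :
    finrank E (midMod E E' h) * finrank E' D = finrank E D := by
  letI : Module E E' := (midMod E E' h).module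
  haveI : IsScalarTower E E' D := ⟨fun k e d => mul_assoc (k : D) (e : D) d⟩
  haveI : Module.Free E E' := Module.Free.of_divisionRing _ _
  exact Module.finrank_mul_finrank E E' D

lemma tower_le (E E' : Subfield D) (h : (E : Set D) ⊆ E') [FiniteDimensional E D]
    (h1 : finrank E (midMod E E' h) = 1) : ∀ x ∈ E', x ∈ E := by
  intro x hx
  set M := midMod E E' h with hM
  haveI : FiniteDimensional E M := FiniteDimensional.of_injective M.subtype Subtype.coe_injective
  have hone : (⟨1, one_mem E'⟩ : M) ≠ 0 := by
    intro hc
    have : (1 : D) = 0 := congrArg Subtype.val hc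
    exact one_ne_zero this
  have hspan : Submodule.span E ({⟨1, one_mem E'⟩} : Set M) = ⊤ := by
    apply Submodule.eq_top_of_finrank_eq
    rw [finrank_span_singleton hone, h1]
  have hmem : (⟨x, hx⟩ : M) ∈ Submodule.span E ({⟨1, one_mem E'⟩} : Set M) := by
    rw [hspan]; trivial
  rcases Submodule.mem_span_singleton.mp hmem with ⟨c, hc⟩
  have : (c : D) * 1 = x := congrArg Subtype.val hc
  rw [mul_one] at this
  exact this ▸ c.2

lemma eq_top_of_finrank_one (E : Subfield D) (h : finrank E D = 1) : ∀ x : D, x ∈ E := by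
  intro x
  haveI : FiniteDimensional E D := FiniteDimensional.of_finrank_pos (h ▸ one_pos)
  have hspan : Submodule.span E ({1} : Set D) = ⊤ := by
    apply Submodule.eq_top_of_finrank_eq
    rw [finrank_span_singleton (one_ne_zero : (1:D) ≠ 0), h]
  have hmem : x ∈ Submodule.span E ({1} : Set D) := by rw [hspan]; trivial
  rcases Submodule.mem_span_singleton.mp hmem with ⟨c, hc⟩
  have : (c : D) * 1 = x := hc
  rw [mul_one] at this
  exact this ▸ c.2

lemma fd_over (E E' : Subfield D) (h : (E : Set D) ⊆ E') [FiniteDimensional E D] :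
    FiniteDimensional E' D := by
  letI : Module E E' := (midMod E E' h).module
  haveI : IsScalarTower E E' D := ⟨fun k e d => mul_assoc (k : D) (e : D) d⟩
  exact FiniteDimensional.right E E' D



lemma arith_aux {ℓ m n t : ℕ} (hℓ : ℓ.Prime) (key : m * (n * t) = ℓ ^ 2)
    (hm : m ≠ 1) (ht : t ≠ 1) : t = ℓ ∧ n = 1 := by
  have htdvd : t ∣ ℓ ^ 2 := Dvd.intro_left (m * n) (by rw [← key]; ring)
  rcases (Nat.dvd_prime_pow hℓ).mp htdvd with ⟨i, hi, rfl⟩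
  interval_cases i
  · simp at ht
  · have hmn : m * n = ℓ := by
      have h' : (m * n) * ℓ = ℓ * ℓ := by
        rw [pow_one] at key
        calc (m * n) * ℓ = m * (n * ℓ) := by ring
        _ = ℓ * ℓ := by rw [key]; ring
      exact Nat.eq_of_mul_eq_mul_right hℓ.pos h'
    have hmℓ : m = ℓ := (hℓ.eq_one_or_self_of_dvd m ⟨n, hmn.symm⟩).resolve_left hm
    refine ⟨pow_one ℓ, ?_⟩
    apply Nat.eq_of_mul_eq_mul_left hℓ.pos
    rw [mul_one]
    calc ℓ * n = m * n := by rw [hmℓ]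
    _ = ℓ := hmn
  · exfalso
    apply hm
    apply Nat.eq_one_of_mul_eq_one_right (n := n)
    have h' : (m * n) * ℓ ^ 2 = 1 * ℓ ^ 2 := by
      rw [one_mul]
      calc (m * n) * ℓ ^ 2 = m * (n * ℓ ^ 2) := by ring
      _ = ℓ ^ 2 := key
    exact Nat.eq_of_mul_eq_mul_right (pow_pos hℓ.pos 2) h'

lemma cent_comm_and_rank {ℓ : ℕ} (hℓ : ℓ.Prime)
    (hdim : finrank (Subring.center D) D = ℓ ^ 2)
    (a : D) (ha : a ∉ Subring.center D) :
    (∀ b ∈ cent ({a} : Set D), ∀ c ∈ cent ({a} : Set D), b * c = c * b) ∧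
      finrank (cent ({a} : Set D)) D = ℓ := by
  haveI : FiniteDimensional (Kc D) D :=
    FiniteDimensional.of_finrank_pos (by rw [finrank_Kc, hdim]; exact pow_pos hℓ.pos 2)
  set C := cent ({a} : Set D) with hC
  set Z := cent (C : Set D) with hZ
  have haC : a ∈ C := mem_cent.mpr fun t ht => by rw [Set.mem_singleton_iff] at ht; rw [ht]
  have haZ : a ∈ Z := mem_cent.mpr fun c hc => ((mem_cent.mp hc) a rfl).symm
  have hZC : (Z : Set D) ⊆ C := fun z hz =>
    mem_cent.mpr fun t ht => by
      rw [Set.mem_singleton_iff] at ht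
      rw [ht]
      exact (mem_cent.mp hz) a haC
  have hKZ : (Kc D : Set D) ⊆ Z := Kc_le_cent _
  haveI : FiniteDimensional Z D := fd_over (Kc D) Z hKZ
  have e1 : finrank (Kc D) (midMod (Kc D) Z hKZ) * finrank Z D = ℓ ^ 2 := by
    rw [tower_eq, finrank_Kc, hdim]
  have e2 : finrank Z (midMod Z C hZC) * finrank C D = finrank Z D := tower_eq _ _ _
  have key : finrank (Kc D) (midMod (Kc D) Z hKZ) *
      (finrank Z (midMod Z C hZC) * finrank C D) = ℓ ^ 2 := by
    rw [e2, e1]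
  have hm1 : finrank (Kc D) (midMod (Kc D) Z hKZ) ≠ 1 := fun h1 =>
    ha (tower_le (Kc D) Z hKZ h1 a haZ)
  have ht1 : finrank C D ≠ 1 := by
    intro h1
    apply ha
    rw [Subring.mem_center_iff]
    intro g
    exact ((mem_cent.mp (eq_top_of_finrank_one C h1 g)) a rfl).symm
  obtain ⟨htℓ, hn1⟩ := arith_aux hℓ key hm1 ht1
  refine ⟨fun b hb c hc => ?_, htℓ⟩
  have hbZ : b ∈ Z := tower_le Z C hZC hn1 b hb
  exact ((mem_cent.mp hbZ) c hc).symm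


lemma u_mem_cent_self (u : D) : u ∈ cent ({u} : Set D) :=
  mem_cent.mpr fun t ht => by rw [Set.mem_singleton_iff] at ht; rw [ht]

lemma root_central {ℓ : ℕ} (hℓ : ℓ.Prime)
    (hdim : finrank (Subring.center D) D = ℓ ^ 2)
    (u : D) (hu : u ^ ℓ = 1) : u ∈ Subring.center D := by
  by_contra hu'
  haveI : FiniteDimensional (Kc D) D :=
    FiniteDimensional.of_finrank_pos (by rw [finrank_Kc, hdim]; exact pow_pos hℓ.pos 2)
  obtain ⟨hcomm, hrk⟩ := cent_comm_and_rank hℓ hdim u hu'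
  set C := cent ({u} : Set D) with hC
  have hKC : (Kc D : Set D) ⊆ C := Kc_le_cent _
  letI : Field (Kc D) :=
    { (inferInstance : DivisionRing (Kc D)) with
      mul_comm := fun x y => Subtype.ext ((Subring.mem_center_iff.mp x.2) y.1).symm }
  letI : Field C :=
    { (inferInstance : DivisionRing C) with
      mul_comm := fun x y => Subtype.ext (hcomm x.1 x.2 y.1 y.2) }
  letI : Module (Kc D) C := (midMod (Kc D) C hKC).module
  letI : Algebra (Kc D) C := Algebra.ofModule
    (fun r x y => Subtype.ext (mul_assoc (r : D) (x : D) (y : D)))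
    (fun r x y => Subtype.ext (by
      show (x : D) * ((r : D) * (y : D)) = (r : D) * ((x : D) * (y : D))
      rw [← mul_assoc, Subring.mem_center_iff.mp r.2 (x : D), mul_assoc]))
  haveI : FiniteDimensional (Kc D) C :=
    FiniteDimensional.of_injective (midMod (Kc D) C hKC).subtype Subtype.coe_injective
  haveI : @Module.Finite (Kc D) C _ _ Algebra.toModule := ‹FiniteDimensional (Kc D) C›
  have hrkKC : finrank (Kc D) C = ℓ := by
    have h1 : finrank (Kc D) (midMod (Kc D) C hKC) * finrank C D = ℓ ^ 2 := by
      rw [tower_eq, finrank_Kc, hdim]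
    rw [hrk] at h1
    have h2 : finrank (Kc D) (midMod (Kc D) C hKC) * ℓ = ℓ * ℓ := by rw [h1]; ring
    exact Nat.eq_of_mul_eq_mul_right hℓ.pos h2
  set uc : C := ⟨u, u_mem_cent_self u⟩ with huc
  have hint : IsIntegral (Kc D) uc := IsIntegral.of_finite (Kc D) uc
  -- the adjoined field
  have hdeg : finrank (Kc D) (IntermediateField.adjoin (Kc D) {uc}) ∣ ℓ := by
    haveI : Module.Free (Kc D) (IntermediateField.adjoin (Kc D) {uc}) :=
      Module.Free.of_divisionRing _ _
    exact ⟨finrank (IntermediateField.adjoin (Kc D) {uc}) C,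
      by rw [Module.finrank_mul_finrank (Kc D) (IntermediateField.adjoin (Kc D) {uc}) C, hrkKC]⟩
  rcases Nat.Prime.eq_one_or_self_of_dvd hℓ _ hdeg with hdeg1 | hdeg1
  · -- degree 1 : u central, contradiction
    have hbot : IntermediateField.adjoin (Kc D) {uc} = ⊥ :=
      IntermediateField.finrank_eq_one_iff.mp hdeg1
    have : uc ∈ (⊥ : IntermediateField (Kc D) C) := by
      rw [← hbot]
      exact IntermediateField.mem_adjoin_simple_self (Kc D) uc
    rcases IntermediateField.mem_bot.mp this with ⟨k, hk⟩
    apply hu'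
    have : (k : D) * 1 = u := congrArg Subtype.val hk
    rw [mul_one] at this
    exact mem_Kc.mp (this ▸ k.2)
  · -- degree ℓ : minpoly has degree ℓ and divides X^ℓ - 1
    have hmindeg : (minpoly (Kc D) uc).natDegree = ℓ := by
      rw [← IntermediateField.adjoin.finrank hint]
      exact hdeg1
    have hpow : uc ^ ℓ = 1 := by
      apply Subtype.ext
      push_cast
      exact hu
    have hdvd : minpoly (Kc D) uc ∣ (Polynomial.X ^ ℓ - 1 : Polynomial (Kc D)) := by
      apply minpoly.dvd
      simp [hpow]
    have hq_monic : (Polynomial.X ^ ℓ - 1 : Polynomial (Kc D)).Monic := by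
      have := Polynomial.monic_X_pow_sub_C (1 : Kc D) hℓ.ne_zero
      simpa using this
    have hq_deg : (Polynomial.X ^ ℓ - 1 : Polynomial (Kc D)).natDegree = ℓ := by
      have := Polynomial.natDegree_X_pow_sub_C (n := ℓ) (r := (1 : Kc D))
      simpa using this
    have hq_eq : (Polynomial.X ^ ℓ - 1 : Polynomial (Kc D)) = minpoly (Kc D) uc :=
      Polynomial.eq_of_monic_of_dvd_of_natDegree_le (minpoly.monic hint) hq_monic hdvd
        (by rw [hq_deg, hmindeg])
    have hirr : Irreducible (Polynomial.X ^ ℓ - 1 : Polynomial (Kc D)) := by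
      rw [hq_eq]; exact minpoly.irreducible hint
    have hroot : (Polynomial.X - Polynomial.C 1 : Polynomial (Kc D)) ∣
        (Polynomial.X ^ ℓ - 1) := by
      apply (Polynomial.dvd_iff_isRoot).mpr
      simp [Polynomial.IsRoot]
    rcases hroot with ⟨w, hw⟩
    rcases hirr.isUnit_or_isUnit hw with hunit | hunit
    · exact Polynomial.not_isUnit_of_natDegree_pos
        (Polynomial.X - Polynomial.C 1 : Polynomial (Kc D))
        (by rw [Polynomial.natDegree_X_sub_C]; omega) hunit
    · have hdw : w.natDegree = 0 := Polynomial.natDegree_eq_zero_of_isUnit hunit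
      have hwne : w ≠ 0 := hunit.ne_zero
      have hXne : (Polynomial.X - Polynomial.C 1 : Polynomial (Kc D)) ≠ 0 :=
        Polynomial.X_sub_C_ne_zero 1
      have hcontr := congrArg Polynomial.natDegree hw
      rw [hq_deg, Polynomial.natDegree_mul hXne hwne, Polynomial.natDegree_X_sub_C, hdw] at hcontr
      exact hℓ.one_lt.ne' (by omega)


lemma conj_pow_central {ℓ : ℕ} (hℓ : ℓ.Prime)
    (hdim : finrank (Subring.center D) D = ℓ ^ 2)
    (x : D) (hx : x ∉ Subring.center D) (h : Dˣ)
    (hmap : ∀ t ∈ cent ({x} : Set D), ((h⁻¹ : Dˣ) : D) * t * (h : D) ∈ cent ({x} : Set D))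
    (hmap' : ∀ t ∈ cent ({x} : Set D), (h : D) * t * ((h⁻¹ : Dˣ) : D) ∈ cent ({x} : Set D))
    (hne : ¬ ((h : D) * x = x * (h : D))) :
    ((h : D) ^ ℓ) ∈ Subring.center D := by
  haveI : FiniteDimensional (Kc D) D :=
    FiniteDimensional.of_finrank_pos (by rw [finrank_Kc, hdim]; exact pow_pos hℓ.pos 2)
  obtain ⟨hcomm, hrk⟩ := cent_comm_and_rank hℓ hdim x hx
  set C := cent ({x} : Set D) with hC
  have hKC : (Kc D : Set D) ⊆ C := Kc_le_cent _
  letI : Field (Kc D) :=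
    { (inferInstance : DivisionRing (Kc D)) with
      mul_comm := fun a b => Subtype.ext ((Subring.mem_center_iff.mp a.2) b.1).symm }
  letI : Field C :=
    { (inferInstance : DivisionRing C) with
      mul_comm := fun a b => Subtype.ext (hcomm a.1 a.2 b.1 b.2) }
  letI : Module (Kc D) C := (midMod (Kc D) C hKC).module
  letI : Algebra (Kc D) C := Algebra.ofModule
    (fun r a b => Subtype.ext (mul_assoc (r : D) (a : D) (b : D)))
    (fun r a b => Subtype.ext (by
      show (a : D) * ((r : D) * (b : D)) = (r : D) * ((a : D) * (b : D))
      rw [← mul_assoc, Subring.mem_center_iff.mp r.2 (a : D), mul_assoc]))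
  haveI : FiniteDimensional (Kc D) C :=
    FiniteDimensional.of_injective (midMod (Kc D) C hKC).subtype Subtype.coe_injective
  haveI : @Module.Finite (Kc D) C _ _ Algebra.toModule := ‹FiniteDimensional (Kc D) C›
  have hrkKC : finrank (Kc D) C = ℓ := by
    have h1 : finrank (Kc D) (midMod (Kc D) C hKC) * finrank C D = ℓ ^ 2 := by
      rw [tower_eq, finrank_Kc, hdim]
    rw [hrk] at h1
    have h2 : finrank (Kc D) (midMod (Kc D) C hKC) * ℓ = ℓ * ℓ := by rw [h1]; ring
    exact Nat.eq_of_mul_eq_mul_right hℓ.pos h2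
  -- the conjugation automorphism
  let σ : C ≃ₐ[Kc D] C :=
    { toFun := fun t => ⟨((h⁻¹ : Dˣ) : D) * t * (h : D), hmap t t.2⟩
      invFun := fun t => ⟨(h : D) * t * ((h⁻¹ : Dˣ) : D), hmap' t t.2⟩
      left_inv := fun t => Subtype.ext (by simp [mul_assoc])
      right_inv := fun t => Subtype.ext (by simp [mul_assoc])
      map_mul' := fun a b => Subtype.ext (by
        show ((h⁻¹ : Dˣ) : D) * ((a : D) * (b : D)) * (h : D) =
          (((h⁻¹ : Dˣ) : D) * a * h) * (((h⁻¹ : Dˣ) : D) * b * h)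
        simp [mul_assoc])
      map_add' := fun a b => Subtype.ext (by
        show ((h⁻¹ : Dˣ) : D) * ((a : D) + (b : D)) * (h : D) =
          ((h⁻¹ : Dˣ) : D) * a * h + ((h⁻¹ : Dˣ) : D) * b * h
        rw [mul_add, add_mul])
      commutes' := fun k => Subtype.ext (by
        show ((h⁻¹ : Dˣ) : D) * ((k : D) * 1) * (h : D) = (k : D) * 1
        rw [mul_one, Subring.mem_center_iff.mp k.2 ((h⁻¹ : Dˣ) : D), mul_assoc]
        simp) }
  have hσapply : ∀ t : C, ((σ t : C) : D) = ((h⁻¹ : Dˣ) : D) * t * (h : D) := fun t => rfl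
  have hxC : x ∈ C := u_mem_cent_self x
  have hσne : σ ≠ 1 := by
    intro hσ1
    apply hne
    have := congrArg (fun f : C ≃ₐ[Kc D] C => ((f ⟨x, hxC⟩ : C) : D)) hσ1
    simp only [hσapply, AlgEquiv.one_apply] at this
    calc (h : D) * x = (h : D) * (((h⁻¹ : Dˣ) : D) * x * h) := by rw [this]
      _ = x * h := by simp [mul_assoc]
  classical
  set H := Subgroup.zpowers σ with hH
  have hart : finrank (IntermediateField.fixedField H) C = Nat.card H :=
    IntermediateField.finrank_fixedField_eq_card H
  have hcard : Nat.card H = orderOf σ := Nat.card_zpowers σ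
  haveI : Module.Free (Kc D) (IntermediateField.fixedField H) := Module.Free.of_divisionRing _ _
  have htower : finrank (Kc D) (IntermediateField.fixedField H) *
      finrank (IntermediateField.fixedField H) C = ℓ := by
    rw [Module.finrank_mul_finrank (Kc D) (IntermediateField.fixedField H) C, hrkKC]
  have hordne : orderOf σ ≠ 1 := fun h1 => hσne (orderOf_eq_one_iff.mp h1)
  have hord : orderOf σ = ℓ := by
    have hdvd : orderOf σ ∣ ℓ := ⟨finrank (Kc D) (IntermediateField.fixedField H), by
      rw [← htower, hart, hcard]; ring⟩
    exact (hℓ.eq_one_or_self_of_dvd _ hdvd).resolve_left hordne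
  have hfixbot : IntermediateField.fixedField H = ⊥ := by
    apply IntermediateField.finrank_eq_one_iff.mp
    have hr : finrank (IntermediateField.fixedField H) C = ℓ := by rw [hart, hcard, hord]
    rw [hr] at htower
    exact Nat.eq_of_mul_eq_mul_right hℓ.pos (htower.trans (one_mul ℓ).symm)
  -- power of σ acts by conjugation with h ^ n
  have hpowapply : ∀ (n : ℕ) (t : C), (((σ ^ n) t : C) : D) =
      (((h ^ n)⁻¹ : Dˣ) : D) * t * ((h ^ n : Dˣ) : D) := by
    intro n
    induction n with
    | zero => intro t; simp
    | succ n ih =>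
      intro t
      rw [pow_succ, AlgEquiv.mul_apply, ih, hσapply]
      have e1 : ((h ^ (n + 1))⁻¹ : Dˣ) = (h ^ n)⁻¹ * h⁻¹ := by
        rw [pow_succ', mul_inv_rev]
      have e2 : (h ^ (n + 1) : Dˣ) = h * h ^ n := pow_succ' h n
      rw [e1, e2, Units.val_mul, Units.val_mul]
      simp [mul_assoc]
  -- h ^ ℓ centralizes C
  have hσℓ : σ ^ ℓ = 1 := by rw [← hord]; exact pow_orderOf_eq_one σ
  have hhx : x * ((h ^ ℓ : Dˣ) : D) = ((h ^ ℓ : Dˣ) : D) * x := by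
    have := hpowapply ℓ ⟨x, hxC⟩
    rw [hσℓ, AlgEquiv.one_apply] at this
    have h2 : ((h ^ ℓ : Dˣ) : D) * x = ((h ^ ℓ : Dˣ) : D) * ((((h ^ ℓ)⁻¹ : Dˣ) : D) * x *
        ((h ^ ℓ : Dˣ) : D)) := by
      conv_lhs => rw [show (x : D) = ((((h ^ ℓ)⁻¹ : Dˣ) : D) * x * ((h ^ ℓ : Dˣ) : D)) from this]
    rw [h2]
    simp [mul_assoc]
  have hmemC : ((h ^ ℓ : Dˣ) : D) ∈ C := mem_cent.mpr fun t ht => by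
    rw [Set.mem_singleton_iff] at ht; rw [ht]; exact hhx
  set w : C := ⟨((h ^ ℓ : Dˣ) : D), hmemC⟩ with hw
  have hσw : σ w = w := by
    apply Subtype.ext
    rw [hσapply]
    show ((h⁻¹ : Dˣ) : D) * ((h ^ ℓ : Dˣ) : D) * ((h : D)) = ((h ^ ℓ : Dˣ) : D)
    have : (h⁻¹ * h ^ ℓ * h : Dˣ) = h ^ ℓ := by group
    calc ((h⁻¹ : Dˣ) : D) * ((h ^ ℓ : Dˣ) : D) * ((h : D)) = ((h⁻¹ * h ^ ℓ * h : Dˣ) : D) := by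
          rw [Units.val_mul, Units.val_mul]
      _ = ((h ^ ℓ : Dˣ) : D) := by rw [this]
  have hwfix : w ∈ IntermediateField.fixedField H := by
    intro g
    have hg : (g : (C ≃ₐ[Kc D] C)) ∈ MulAction.stabilizer (C ≃ₐ[Kc D] C) w := by
      have hle : Subgroup.zpowers σ ≤ MulAction.stabilizer (C ≃ₐ[Kc D] C) w :=
        Subgroup.zpowers_le.mpr hσw
      exact hle g.2
    exact hg
  rw [hfixbot] at hwfix
  rcases IntermediateField.mem_bot.mp hwfix with ⟨k, hk⟩
  have hval : (k : D) * 1 = ((h ^ ℓ : Dˣ) : D) := congrArg Subtype.val hk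
  rw [mul_one] at hval
  have : ((h ^ ℓ : Dˣ) : D) ∈ Subring.center D := mem_Kc.mp (hval ▸ k.2)
  rwa [Units.val_pow_eq_pow_val] at this


lemma cent_eq_of_commute {ℓ : ℕ} (hℓ : ℓ.Prime)
    (hdim : finrank (Subring.center D) D = ℓ ^ 2)
    (a b : D) (ha : a ∉ Subring.center D) (hb : b ∉ Subring.center D)
    (hab : a * b = b * a) : cent ({a} : Set D) = cent ({b} : Set D) := by
  obtain ⟨hcommA, -⟩ := cent_comm_and_rank hℓ hdim a ha
  obtain ⟨hcommB, -⟩ := cent_comm_and_rank hℓ hdim b hb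
  have hbA : b ∈ cent ({a} : Set D) := mem_cent.mpr fun t ht => by
    rw [Set.mem_singleton_iff] at ht; rw [ht]; exact hab
  have haB : a ∈ cent ({b} : Set D) := mem_cent.mpr fun t ht => by
    rw [Set.mem_singleton_iff] at ht; rw [ht]; exact hab.symm
  apply SetLike.ext
  intro s
  constructor
  · intro hs
    exact mem_cent.mpr fun t ht => by
      rw [Set.mem_singleton_iff] at ht; rw [ht]
      exact (hcommA s hs b hbA).symm
  · intro hs
    exact mem_cent.mpr fun t ht => by
      rw [Set.mem_singleton_iff] at ht; rw [ht]
      exact (hcommB s hs a haB).symm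


end CSAAux

theorem subgroup_of_units_of_prime_degree_division_algebra_isCSA
    (D : Type*) [DivisionRing D] (ℓ : ℕ) (hℓ : ℓ.Prime)
    (hdim : Module.finrank (Subring.center D) D = ℓ ^ 2)
    (hroots : ∀ x : D, x ∈ Subring.center D → x ^ ℓ = 1 → x = 1)
    (G : Subgroup Dˣ)
    (hG : ∀ g : Dˣ, g ∈ G → (g : D) ∈ Subring.center D → g = 1) :
    ∀ g : G, g ≠ 1 →
      ((∀ h₁ h₂ : G, Commute g h₁ → Commute g h₂ → Commute h₁ h₂) ∧
        (∀ h : G, ¬ Commute g h →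
          ∀ x : G, Commute g x → Commute g (h⁻¹ * x * h) → x = 1)) := by
  intro g hg
  have comm_iff : ∀ p q : G, Commute p q ↔
      (((p : Dˣ) : D)) * (((q : Dˣ) : D)) = (((q : Dˣ) : D)) * (((p : Dˣ) : D)) := by
    intro p q
    constructor
    · intro hpq
      exact congrArg (fun r : G => ((r : Dˣ) : D)) hpq
    · intro hd
      exact Subtype.ext (Units.ext hd)
  have noncen : ∀ p : G, p ≠ 1 → ((p : Dˣ) : D) ∉ Subring.center D := by
    intro p hp hc
    exact hp (Subtype.ext (hG p p.2 hc))
  have hgD : ((g : Dˣ) : D) ∉ Subring.center D := noncen g hg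
  set a : D := ((g : Dˣ) : D) with ha
  obtain ⟨hcommA, -⟩ := cent_comm_and_rank hℓ hdim a hgD
  constructor
  · intro h₁ h₂ hc1 hc2
    have m1 : ((h₁ : Dˣ) : D) ∈ cent ({a} : Set D) := mem_cent.mpr fun t ht => by
      rw [Set.mem_singleton_iff] at ht; rw [ht]
      exact (comm_iff g h₁).mp hc1
    have m2 : ((h₂ : Dˣ) : D) ∈ cent ({a} : Set D) := mem_cent.mpr fun t ht => by
      rw [Set.mem_singleton_iff] at ht; rw [ht]
      exact (comm_iff g h₂).mp hc2
    exact (comm_iff h₁ h₂).mpr (hcommA _ m1 _ m2)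
  · intro h hgh x hgx hcy
    by_contra hxne
    set b : D := ((x : Dˣ) : D) with hb
    have hbD : b ∉ Subring.center D := noncen x hxne
    obtain ⟨hcommB, -⟩ := cent_comm_and_rank hℓ hdim b hbD
    have hab : a * b = b * a := (comm_iff g x).mp hgx
    have hcentab : cent ({a} : Set D) = cent ({b} : Set D) :=
      cent_eq_of_commute hℓ hdim a b hgD hbD hab
    -- the conjugated element
    set hu : Dˣ := (h : Dˣ) with hhu
    have hyd : ((((h⁻¹ * x * h : G) : Dˣ)) : D) = ((hu⁻¹ : Dˣ) : D) * b * (hu : D) := rfl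
    set yd : D := ((hu⁻¹ : Dˣ) : D) * b * (hu : D) with hyddef
    have hydA : yd ∈ cent ({a} : Set D) := mem_cent.mpr fun t ht => by
      rw [Set.mem_singleton_iff] at ht; rw [ht]
      have := (comm_iff g (h⁻¹ * x * h)).mp hcy
      rw [hyd] at this
      exact this
    have hydB : yd ∈ cent ({b} : Set D) := hcentab ▸ hydA
    have hydD : yd ∉ Subring.center D := by
      intro hc
      apply hbD
      have hcomm' : ∀ t : D, t * yd = yd * t := Subring.mem_center_iff.mp hc
      have : b = yd := by
        have h1 : (hu : D) * yd * ((hu⁻¹ : Dˣ) : D) = b := by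
          rw [hyddef]
          simp [mul_assoc]
        rw [← h1, hcomm' (hu : D), mul_assoc]
        simp
      rw [this]; exact hc
    -- cent b = cent yd
    have hbyd : b * yd = yd * b := by
      have hbB : b ∈ cent ({b} : Set D) := u_mem_cent_self b
      exact hcommB b hbB yd hydB
    have hcentbyd : cent ({b} : Set D) = cent ({yd} : Set D) :=
      cent_eq_of_commute hℓ hdim b yd hbD hydD hbyd
    -- conjugation maps
    have hmap : ∀ t ∈ cent ({b} : Set D), ((hu⁻¹ : Dˣ) : D) * t * (hu : D) ∈
        cent ({b} : Set D) := by
      intro t htb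
      rw [hcentbyd]
      apply mem_cent.mpr
      intro s hs
      rw [Set.mem_singleton_iff] at hs; rw [hs, hyddef]
      have htcomm : b * t = t * b := mem_cent.mp htb b rfl
      calc ((hu⁻¹:Dˣ):D) * b * ↑hu * (((hu⁻¹:Dˣ):D) * t * ↑hu)
          = ((hu⁻¹:Dˣ):D) * (b * t) * ↑hu := by simp [mul_assoc]
        _ = ((hu⁻¹:Dˣ):D) * (t * b) * ↑hu := by rw [htcomm]
        _ = ((hu⁻¹:Dˣ):D) * t * ↑hu * (((hu⁻¹:Dˣ):D) * b * ↑hu) := by simp [mul_assoc]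
    have hmap' : ∀ t ∈ cent ({b} : Set D), (hu : D) * t * ((hu⁻¹ : Dˣ) : D) ∈
        cent ({b} : Set D) := by
      intro t htb
      have htyd'' : t ∈ cent ({yd} : Set D) := by rw [← hcentbyd]; exact htb
      have htyd : yd * t = t * yd := mem_cent.mp htyd'' yd rfl
      apply mem_cent.mpr
      intro s hs
      rw [Set.mem_singleton_iff] at hs; rw [hs]
      have key : (hu : D) * (yd * t) * ((hu⁻¹:Dˣ):D) = (hu : D) * (t * yd) * ((hu⁻¹:Dˣ):D) := by
        rw [htyd]
      have hydb : (hu : D) * yd * ((hu⁻¹:Dˣ):D) = b := by rw [hyddef]; simp [mul_assoc]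
      calc b * ((hu:D) * t * ((hu⁻¹:Dˣ):D))
          = ((hu:D) * yd * ((hu⁻¹:Dˣ):D)) * ((hu:D) * t * ((hu⁻¹:Dˣ):D)) := by rw [hydb]
        _ = (hu:D) * (yd * t) * ((hu⁻¹:Dˣ):D) := by simp [mul_assoc]
        _ = (hu:D) * (t * yd) * ((hu⁻¹:Dˣ):D) := key
        _ = ((hu:D) * t * ((hu⁻¹:Dˣ):D)) * ((hu:D) * yd * ((hu⁻¹:Dˣ):D)) := by simp [mul_assoc]
        _ = ((hu:D) * t * ((hu⁻¹:Dˣ):D)) * b := by rw [hydb]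
    -- h does not commute with b
    have hne : ¬ ((hu : D) * b = b * (hu : D)) := by
      intro hcb
      apply hgh
      apply (comm_iff g h).mpr
      have hhB : (hu : D) ∈ cent ({b} : Set D) := mem_cent.mpr fun t ht => by
        rw [Set.mem_singleton_iff] at ht; rw [ht]; exact hcb.symm
      have haB : a ∈ cent ({b} : Set D) := hcentab ▸ u_mem_cent_self a
      exact (hcommB a haB (hu : D) hhB)
    have hcentral := conj_pow_central hℓ hdim b hbD hu hmap hmap' hne
    -- h ^ ℓ is central, hence = 1 in G
    have hpow1 : ((hu : D)) ^ ℓ = 1 := by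
      have : ((h ^ ℓ : G) : Dˣ) = 1 := hG ((h ^ ℓ : G) : Dˣ) (h ^ ℓ).2 (by
        rw [show (((h ^ ℓ : G) : Dˣ) : D) = ((hu : D)) ^ ℓ from rfl]
        exact hcentral)
      calc ((hu : D)) ^ ℓ = (((h ^ ℓ : G) : Dˣ) : D) := rfl
        _ = 1 := by rw [this]; rfl
    have : (hu : D) ∈ Subring.center D := root_central hℓ hdim (hu : D) hpow1
    apply hgh
    apply (comm_iff g h).mpr
    exact Subring.mem_center_iff.mp this a
end
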